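/- arXiv:1107.3264 — 8 statements merged into one kernel-verified Lean document; each statement's English description precedes it below -/
import Mathlib

section
/- Flett's mean value theorem: Let a < b be real numbers and let f : [a,b] → ℝ be differentiable on [a,b] (one-sided at the endpoints) with f'(a) = f'(b). Then there exists η ∈ (a,b) such that f'(η) = (f(η) - f(a))/(η - a), i.e. f(η) - f(a) = (η - a) f'(η). -/
open Set Filter Topology

private lemma flett_aux (a b : ℝ) (hab : a < b) (f f' : ℝ → ℝ)
    (hf : ∀ x ∈ Set.Icc a b, HasDerivWithinAt f (f' x) (Set.Icc a b) x)
    (hends : f' a = f' b)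
    (hgb : f' b ≤ (f b - f a) / (b - a)) :
    ∃ η ∈ Set.Ioo a b, f η - f a = (η - a) * f' η := by
  set g : ℝ → ℝ := fun x => if x = a then f' a else (f x - f a) / (x - a) with hg
  set G : ℝ → ℝ := fun x => (f' x * (x - a) - (f x - f a)) / (x - a) ^ 2 with hG
  have hga : g a = f' a := if_pos rfl
  have hgx : ∀ x, x ≠ a → g x = (f x - f a) / (x - a) := fun x hx => if_neg hx
  -- derivative of g at interior points
  have hderiv : ∀ x ∈ Ioo a b, HasDerivAt g (G x) x := by
    intro x hx
    have hxa : x - a ≠ 0 := sub_ne_zero.2 (ne_of_gt hx.1)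
    have hfx : HasDerivAt f (f' x) x :=
      (hf x (Ioo_subset_Icc_self hx)).hasDerivAt (Icc_mem_nhds hx.1 hx.2)
    have hq : HasDerivAt (fun y => (f y - f a) / (y - a)) (G x) x := by
      have h1 : HasDerivAt (fun y => f y - f a) (f' x) x := hfx.sub_const _
      have h2 : HasDerivAt (fun y => y - a) 1 x := (hasDerivAt_id x).sub_const _
      have := h1.div h2 hxa
      simpa [hG, mul_one, Pi.div_def] using this
    refine hq.congr_of_eventuallyEq ?_
    have : {y : ℝ | y ≠ a} ∈ 𝓝 x := isOpen_ne.mem_nhds (ne_of_gt hx.1)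
    filter_upwards [this] with y hy
    exact hgx y hy
  -- derivative of g at b within Icc
  have hderivb : HasDerivWithinAt g (G b) (Icc a b) b := by
    have hba : b - a ≠ 0 := sub_ne_zero.2 (ne_of_gt hab)
    have hfb : HasDerivWithinAt f (f' b) (Icc a b) b := hf b (right_mem_Icc.2 hab.le)
    have hq : HasDerivWithinAt (fun y => (f y - f a) / (y - a)) (G b) (Icc a b) b := by
      have h1 : HasDerivWithinAt (fun y => f y - f a) (f' b) (Icc a b) b := hfb.sub_const _
      have h2 : HasDerivWithinAt (fun y => y - a) 1 (Icc a b) b :=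
        (hasDerivWithinAt_id b _).sub_const _
      have := h1.div h2 hba
      simpa [hG, mul_one, Pi.div_def] using this
    refine hq.congr_of_eventuallyEq ?_ (hgx b (ne_of_gt hab))
    have : {y : ℝ | y ≠ a} ∈ 𝓝[Icc a b] b :=
      nhdsWithin_le_nhds (isOpen_ne.mem_nhds (ne_of_gt hab))
    filter_upwards [this] with y hy
    exact hgx y hy
  -- continuity of g on Icc
  have hgc : ContinuousOn g (Icc a b) := by
    intro x hx
    rcases eq_or_ne x a with rfl | hxa
    · rw [← continuousWithinAt_diff_self]
      have hslope : Tendsto (slope f x) (𝓝[Icc x b \ {x}] x) (𝓝 (f' x)) :=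
        hasDerivWithinAt_iff_tendsto_slope.1 (hf x hx)
      rw [ContinuousWithinAt, hga]
      refine hslope.congr' ?_
      filter_upwards [self_mem_nhdsWithin] with y hy
      rw [slope_def_field, hgx y hy.2]
    · have hxa' : x - a ≠ 0 := sub_ne_zero.2 hxa
      have hq : ContinuousWithinAt (fun y => (f y - f a) / (y - a)) (Icc a b) x := by
        have hfc : ContinuousWithinAt f (Icc a b) x := (hf x hx).continuousWithinAt
        exact (hfc.sub continuousWithinAt_const).div
          (continuousWithinAt_id.sub continuousWithinAt_const) hxa'
      refine (hq.congr_of_eventuallyEq ?_ (hgx x hxa))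
      have : {y : ℝ | y ≠ a} ∈ 𝓝[Icc a b] x := nhdsWithin_le_nhds (isOpen_ne.mem_nhds hxa)
      filter_upwards [this] with y hy
      exact hgx y hy
  have hba : b - a ≠ 0 := sub_ne_zero.2 (ne_of_gt hab)
  have hgbv : g b = (f b - f a) / (b - a) := hgx b (ne_of_gt hab)
  -- from G η = 0 conclude
  have hconcl : ∀ η ∈ Ioo a b, G η = 0 → f η - f a = (η - a) * f' η := by
    intro η hη hGη
    have hηa : (η - a) ^ 2 ≠ 0 := pow_ne_zero _ (sub_ne_zero.2 (ne_of_gt hη.1))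
    have := (div_eq_zero_iff.1 hGη).resolve_right hηa
    linarith [sub_eq_zero.1 (by linarith : f' η * (η - a) - (f η - f a) - 0 = 0)]
  rcases eq_or_lt_of_le hgb with heq | hlt
  · -- Rolle case : g a = g b
    have hgab : g a = g b := by rw [hga, hgbv, hends, heq]
    obtain ⟨η, hη, hdη⟩ := exists_deriv_eq_zero hab hgc hgab
    refine ⟨η, hη, hconcl η hη ?_⟩
    rw [← (hderiv η hη).deriv, hdη]
  · -- max case : g b > f' b
    obtain ⟨η, hηmem, hηmax⟩ :=
      isCompact_Icc.exists_isMaxOn (nonempty_Icc.2 hab.le) hgc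
    have hηa : η ≠ a := by
      intro h
      have h1 : g b ≤ g η := hηmax (right_mem_Icc.2 hab.le)
      rw [h, hga, hends] at h1
      rw [hgbv] at h1
      exact absurd h1 (not_le.2 hlt)
    have hηb : η ≠ b := by
      intro h
      rw [h] at hηmax
      have hGb : G b < 0 := by
        rw [hG]
        have hba' : (0:ℝ) < b - a := by linarith
        apply div_neg_of_neg_of_pos
        · have h2 : f' b * (b - a) < f b - f a := (lt_div_iff₀ hba').1 (h ▸ hlt)
          linarith
        · positivity
      have hslope : Tendsto (slope g b) (𝓝[Icc a b \ {b}] b) (𝓝 (G b)) :=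
        hasDerivWithinAt_iff_tendsto_slope.1 hderivb
      have hev : ∀ᶠ y in 𝓝[Icc a b \ {b}] b, slope g b y < 0 :=
        hslope.eventually_lt_const hGb
      have hne : (𝓝[Icc a b \ {b}] b).NeBot := by
        rw [Icc_sdiff_right]; exact right_nhdsWithin_Ico_neBot hab
      obtain ⟨y, hy1, hy2⟩ := (hev.and self_mem_nhdsWithin).exists
      have hyb : y < b := lt_of_le_of_ne hy2.1.2 hy2.2
      rw [slope_def_field] at hy1
      have hpos : 0 < g y - g b := by
        rcases div_neg_iff.1 hy1 with ⟨h1, _⟩ | ⟨_, h2⟩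
        · exact h1
        · linarith
      have hle : g y ≤ g b := hηmax hy2.1
      linarith
    have hηIoo : η ∈ Ioo a b :=
      ⟨lt_of_le_of_ne hηmem.1 (Ne.symm hηa), lt_of_le_of_ne hηmem.2 hηb⟩
    have hloc : IsLocalMax g η := hηmax.isLocalMax (Icc_mem_nhds hηIoo.1 hηIoo.2)
    exact ⟨η, hηIoo, hconcl η hηIoo (hloc.hasDerivAt_eq_zero (hderiv η hηIoo))⟩

/-- **Flett's mean value theorem.** If `f` is differentiable on `[a,b]`
(one-sided derivatives at the endpoints) and `f' a = f' b`, then there is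
`η ∈ (a,b)` with `f η - f a = (η - a) * f' η`. -/
theorem flett_mean_value (a b : ℝ) (hab : a < b) (f f' : ℝ → ℝ)
    (hf : ∀ x ∈ Set.Icc a b, HasDerivWithinAt f (f' x) (Set.Icc a b) x)
    (hends : f' a = f' b) :
    ∃ η ∈ Set.Ioo a b, f η - f a = (η - a) * f' η := by
  rcases le_total (f' b) ((f b - f a) / (b - a)) with h | h
  · exact flett_aux a b hab f f' hf hends h
  · obtain ⟨η, hη, heq⟩ := flett_aux a b hab (fun x => -f x) (fun x => -f' x)
      (fun x hx => (hf x hx).neg) (by rw [hends])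
      (by
          rw [show -f b - -f a = -(f b - f a) by ring, neg_div]
          exact neg_le_neg h)
    exact ⟨η, hη, by linarith⟩
end

section
/- Riedel–Sahoo theorem (Flett's theorem without the boundary condition): Let a < b be real numbers and let f : [a,b] → ℝ be differentiable on [a,b]. Then there exists η ∈ (a,b) such that f'(η) = (f(η) - f(a))/(η - a) + ((f'(b) - f'(a))/(b - a)) · (η - a)/2, i.e. f(η) - f(a) = (η - a) f'(η) - ((f'(b) - f'(a))/(b - a)) · (η - a)²/2. -/
open Set Filter

private noncomputable def flettPsi (g : ℝ → ℝ) (a d : ℝ) : ℝ → ℝ :=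
  fun x => if x = a then d else (g x - g a) / (x - a)

private lemma flettPsi_hasDeriv {a b : ℝ} (g g' : ℝ → ℝ)
    (hg : ∀ x ∈ Icc a b, HasDerivWithinAt g (g' x) (Icc a b) x)
    {x : ℝ} (hx : x ∈ Icc a b) (hxa : x ≠ a) :
    HasDerivWithinAt (flettPsi g a (g' a))
      ((g' x * (x - a) - (g x - g a)) / (x - a) ^ 2) (Icc a b) x := by
  have hne : x - a ≠ 0 := sub_ne_zero.2 hxa
  have h1 : HasDerivWithinAt (fun y => (g y - g a) / (y - a))
      ((g' x * (x - a) - (g x - g a) * 1) / (x - a) ^ 2) (Icc a b) x :=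
    ((hg x hx).sub_const _).div ((hasDerivWithinAt_id x _).sub_const _) hne
  have h2 : (g' x * (x - a) - (g x - g a) * 1) / (x - a) ^ 2
      = (g' x * (x - a) - (g x - g a)) / (x - a) ^ 2 := by ring_nf
  rw [h2] at h1
  refine h1.congr_of_eventuallyEq ?_ ?_
  · filter_upwards [mem_nhdsWithin_of_mem_nhds (isOpen_ne.mem_nhds hxa)] with y hy
    simp [flettPsi, hy]
  · simp [flettPsi, hxa]

private lemma flettPsi_contOn {a b : ℝ} (hab : a < b) (g g' : ℝ → ℝ)
    (hg : ∀ x ∈ Icc a b, HasDerivWithinAt g (g' x) (Icc a b) x) :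
    ContinuousOn (flettPsi g a (g' a)) (Icc a b) := by
  intro x hx
  rcases eq_or_ne x a with rfl | hxa
  · rw [← continuousWithinAt_diff_self]
    have h := (hasDerivWithinAt_iff_tendsto_slope).1 (hg x hx)
    have : Tendsto (flettPsi g x (g' x)) (nhdsWithin x (Icc x b \ {x})) (nhds (g' x)) := by
      refine h.congr' ?_
      filter_upwards [self_mem_nhdsWithin] with y hy
      have : y ≠ x := hy.2
      simp [flettPsi, this, slope_def_field]
    simpa [ContinuousWithinAt, flettPsi] using this
  · exact (flettPsi_hasDeriv g g' hg hx hxa).continuousWithinAt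

/-- Flett under the one-sided inequalities. -/
private lemma flett_aux_s1 {a b : ℝ} (hab : a < b) (g g' : ℝ → ℝ)
    (hg : ∀ x ∈ Icc a b, HasDerivWithinAt g (g' x) (Icc a b) x)
    (h1 : g' a * (b - a) < g b - g a) (h2 : g' b * (b - a) < g b - g a) :
    ∃ η ∈ Ioo a b, g η - g a = (η - a) * g' η := by
  have hba : (0:ℝ) < b - a := by linarith
  obtain ⟨c, hc, hmax⟩ := isCompact_Icc.exists_isMaxOn (nonempty_Icc.2 hab.le)
    (flettPsi_contOn hab g g' hg)
  set ψ := flettPsi g a (g' a) with hψ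
  have hmax' : ∀ y ∈ Icc a b, ψ y ≤ ψ c := fun y hy => hmax hy
  have hψb : ψ b = (g b - g a) / (b - a) := by simp [hψ, flettPsi, hab.ne']
  have hψa : ψ a = g' a := by simp [hψ, flettPsi]
  have hca : c ≠ a := by
    intro h
    have hle := hmax' b ⟨hab.le, le_rfl⟩
    rw [h, hψa, hψb, div_le_iff₀ hba] at hle
    linarith
  have hcb : c ≠ b := by
    intro h
    have hder := flettPsi_hasDeriv g g' hg (show b ∈ Icc a b from ⟨hab.le, le_rfl⟩) hab.ne'
    have hneg : (g' b * (b - a) - (g b - g a)) / (b - a) ^ 2 < 0 :=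
      div_neg_of_neg_of_pos (by linarith) (by positivity)
    have hslope := hasDerivWithinAt_iff_tendsto_slope.1 hder
    have hNB : (nhdsWithin b (Icc a b \ {b})).NeBot := by
      apply mem_closure_iff_nhdsWithin_neBot.1
      have hcl : b ∈ closure (Ico a b) := by rw [closure_Ico hab.ne]; exact ⟨hab.le, le_rfl⟩
      have hsub : Ico a b ⊆ Icc a b \ {b} := fun y hy => ⟨⟨hy.1, hy.2.le⟩, ne_of_lt hy.2⟩
      exact closure_mono hsub hcl
    obtain ⟨y, hylt, hy⟩ := ((hslope.eventually_lt_const hneg).and self_mem_nhdsWithin).exists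
    have hyb : y < b := lt_of_le_of_ne hy.1.2 hy.2
    have hyψ : ψ y ≤ ψ b := h ▸ hmax' y hy.1
    rw [slope_def_field] at hylt
    rcases div_neg_iff.1 hylt with ⟨hnum, hden⟩ | ⟨hnum, hden⟩ <;> linarith
  have hcIoo : c ∈ Ioo a b := ⟨lt_of_le_of_ne hc.1 (Ne.symm hca), lt_of_le_of_ne hc.2 hcb⟩
  have hder : HasDerivAt ψ ((g' c * (c - a) - (g c - g a)) / (c - a) ^ 2) c :=
    (flettPsi_hasDeriv g g' hg hc hca).hasDerivAt (Icc_mem_nhds hcIoo.1 hcIoo.2)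
  have hmaxon : IsMaxOn ψ (Icc a b) c := hmax
  have hloc : IsLocalMax ψ c := hmaxon.isLocalMax (Icc_mem_nhds hcIoo.1 hcIoo.2)
  have h0 := hloc.hasDerivAt_eq_zero hder
  have hcane : c - a ≠ 0 := sub_ne_zero.2 hca
  refine ⟨c, hcIoo, ?_⟩
  field_simp at h0
  linarith

private lemma flett {a b : ℝ} (hab : a < b) (g g' : ℝ → ℝ)
    (hg : ∀ x ∈ Icc a b, HasDerivWithinAt g (g' x) (Icc a b) x)
    (heq : g' a = g' b) :
    ∃ η ∈ Ioo a b, g η - g a = (η - a) * g' η := by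
  have hba : (0:ℝ) < b - a := by linarith
  rcases lt_trichotomy (g' b * (b - a)) (g b - g a) with h | h | h
  · exact flett_aux_s1 hab g g' hg (heq ▸ h) h
  · -- equality case, by MVT applied to ψ
    set ψ := flettPsi g a (g' a) with hψ
    have hψ' : ∀ x ∈ Ioo a b,
        HasDerivAt ψ ((g' x * (x - a) - (g x - g a)) / (x - a) ^ 2) x := fun x hx =>
      (flettPsi_hasDeriv g g' hg (Ioo_subset_Icc_self hx) (ne_of_gt hx.1)).hasDerivAt
        (Icc_mem_nhds hx.1 hx.2)
    obtain ⟨c, hc, hceq⟩ := exists_hasDerivAt_eq_slope ψ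
      (fun x => (g' x * (x - a) - (g x - g a)) / (x - a) ^ 2) hab
      (flettPsi_contOn hab g g' hg) hψ'
    have hψb : ψ b = (g b - g a) / (b - a) := by simp [hψ, flettPsi, hab.ne']
    have hψa : ψ a = g' a := by simp [hψ, flettPsi]
    have hz : (ψ b - ψ a) / (b - a) = 0 := by
      rw [hψb, hψa, heq]
      rw [div_eq_zero_iff]
      left
      rw [div_sub' (ne_of_gt hba)]
      rw [div_eq_zero_iff]
      left
      linarith
    rw [hz] at hceq
    have hcane : c - a ≠ 0 := sub_ne_zero.2 (ne_of_gt hc.1)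
    refine ⟨c, hc, ?_⟩
    field_simp at hceq
    linarith
  · -- apply the max case to -g
    obtain ⟨η, hη, he⟩ := flett_aux_s1 hab (fun y => -g y) (fun y => -g' y)
      (fun x hx => (hg x hx).neg) (by simp; nlinarith [heq]) (by simp; linarith)
    exact ⟨η, hη, by linarith⟩

/-- **Riedel–Sahoo theorem.** Flett's mean value theorem without the boundary
condition `f' a = f' b`. -/
theorem riedel_sahoo (a b : ℝ) (hab : a < b) (f f' : ℝ → ℝ)
    (hf : ∀ x ∈ Set.Icc a b, HasDerivWithinAt f (f' x) (Set.Icc a b) x) :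
    ∃ η ∈ Set.Ioo a b,
      f η - f a = (η - a) * f' η - (f' b - f' a) / (b - a) * (η - a) ^ 2 / 2 := by
  set c := (f' b - f' a) / (b - a) with hc
  have hba : b - a ≠ 0 := sub_ne_zero.2 (ne_of_gt hab)
  have hg : ∀ x ∈ Icc a b,
      HasDerivWithinAt (fun y => f y - c * y ^ 2 / 2) (f' x - c * x) (Icc a b) x := by
    intro x hx
    have h2 : HasDerivWithinAt (fun y => c * y ^ 2 / 2) (c * x) (Icc a b) x := by
      have := (((hasDerivWithinAt_pow (s := Icc a b) 2 x).const_mul c).div_const 2)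
      rw [show c * x = c * (((2:ℕ):ℝ) * x ^ (2 - 1)) / 2 by push_cast; ring]
      exact this
    exact (hf x hx).sub h2
  have heq : f' a - c * a = f' b - c * b := by
    have : c * (b - a) = f' b - f' a := by
      rw [hc]; field_simp
    linarith
  obtain ⟨η, hη, he⟩ := flett hab (fun y => f y - c * y ^ 2 / 2) (fun y => f' y - c * y) hg heq
  refine ⟨η, hη, ?_⟩

  linear_combination he
end

section
/- Pawlikowska's theorem (higher-order Flett mean value theorem): Let a < b be real numbers, let n ≥ 1, and let f : [a,b] → ℝ be n-times differentiable on [a,b] with f⁽ⁿ⁾(a) = f⁽ⁿ⁾(b). Then there exists η ∈ (a,b) such that f(η) - f(a) = Σ_{i=1}^{n} ((-1)^{i+1}/i!) (η - a)^i f⁽ⁱ⁾(η). -/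
open Set Filter Topology Finset


lemma phi_deriv (a b : ℝ) (m : ℕ) (F : ℕ → ℝ → ℝ)
    (hF : ∀ i < m + 1, ∀ x ∈ Set.Icc a b, HasDerivWithinAt (F i) (F (i+1) x) (Set.Icc a b) x)
    (x : ℝ) (hx : x ∈ Set.Icc a b) :
    HasDerivWithinAt (fun y => F 0 y - F 0 a -
        ∑ j ∈ Finset.range m, (-1:ℝ)^j / (Nat.factorial (j+1)) * (y - a)^(j+1) * F (j+1) y)
      ((-1:ℝ)^m / (Nat.factorial m) * (x - a)^m * F (m+1) x) (Set.Icc a b) x := by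
  set v : ℕ → ℝ := fun j => (-1:ℝ)^j / (Nat.factorial j) * (x - a)^j * F (j+1) x with hv
  have hterm : ∀ j ∈ Finset.range m,
      HasDerivWithinAt (fun y => (-1:ℝ)^j / (Nat.factorial (j+1)) * (y - a)^(j+1) * F (j+1) y)
        (v j - v (j+1)) (Set.Icc a b) x := by
    intro j hj
    have hjm : j + 1 < m + 1 := by simpa using Finset.mem_range.1 hj
    have h1 : HasDerivWithinAt (fun y : ℝ => (-1:ℝ)^j / (Nat.factorial (j+1)) * (y - a)^(j+1))
        ((-1:ℝ)^j / (Nat.factorial (j+1)) * (((j:ℝ)+1) * (x - a)^j)) (Set.Icc a b) x := by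
      have := (((hasDerivAt_id x).sub_const a).fun_pow (j+1)).hasDerivWithinAt (s := Set.Icc a b)
      simpa using this.const_mul ((-1:ℝ)^j / (Nat.factorial (j+1)))
    have h2 : HasDerivWithinAt (F (j+1)) (F (j+2) x) (Set.Icc a b) x := hF (j+1) hjm x hx
    have h3 := h1.mul h2
    refine h3.congr_deriv ?_
    have hfac : ((Nat.factorial (j+1) : ℝ)) = ((j:ℝ)+1) * (Nat.factorial j) := by
      push_cast [Nat.factorial_succ]; ring
    have hfj : (Nat.factorial j : ℝ) ≠ 0 := Nat.cast_ne_zero.2 (Nat.factorial_ne_zero j)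
    have hfj1 : (Nat.factorial (j+1) : ℝ) ≠ 0 := Nat.cast_ne_zero.2 (Nat.factorial_ne_zero (j+1))
    rw [hv]
    simp only
    field_simp [hfac]
    push_cast [Nat.factorial_succ]
    ring
  have hsum := HasDerivWithinAt.fun_sum hterm
  have h0 : HasDerivWithinAt (F 0) (F 1 x) (Set.Icc a b) x := hF 0 (by omega) x hx
  have hcomb := (h0.sub_const (F 0 a)).sub hsum
  have hval : F 1 x - ∑ j ∈ Finset.range m, (v j - v (j+1)) =
      (-1:ℝ)^m / (Nat.factorial m) * (x - a)^m * F (m+1) x := by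
    rw [Finset.sum_range_sub' v m]
    have hv0 : v 0 = F 1 x := by simp [hv]
    rw [hv0, hv]
    ring
  rw [← hval]
  exact hcomb


private lemma aux_pow1 (m : ℕ) (y : ℝ) : (m:ℝ) * y^(m-1) * y = (m:ℝ) * y^m := by
  cases m with
  | zero => simp
  | succ k => simp only [Nat.add_sub_cancel, pow_succ]; push_cast; ring

private lemma aux_pow2 (m : ℕ) (y : ℝ) : (m:ℝ) * y^(m-1) * y^2 = (m:ℝ) * y^(m+1) := by
  cases m with
  | zero => simp
  | succ k => simp only [Nat.add_sub_cancel, pow_succ]; push_cast; ring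

lemma phi_lim (a b : ℝ) (hab : a < b) (m : ℕ) (F : ℕ → ℝ → ℝ)
    (hF : ∀ i < m + 1, ∀ x ∈ Set.Icc a b, HasDerivWithinAt (F i) (F (i+1) x) (Set.Icc a b) x)
    (φ φ' : ℝ → ℝ)
    (hφdef : ∀ x, φ x = F 0 x - F 0 a -
        ∑ j ∈ Finset.range m, (-1:ℝ)^j / (Nat.factorial (j+1)) * (x - a)^(j+1) * F (j+1) x)
    (hφ'def : ∀ x, φ' x = (-1:ℝ)^m / (Nat.factorial m) * (x - a)^m * F (m+1) x)
    (hφ : ∀ x ∈ Set.Icc a b, HasDerivWithinAt φ (φ' x) (Set.Icc a b) x) :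
    Filter.Tendsto (fun x => φ x / (x - a) ^ (m + 1)) (nhdsWithin a (Set.Ioc a b))
      (nhds ((-1:ℝ)^m / (Nat.factorial m) * F (m+1) a / ((m:ℝ)+1))) := by
  set c : ℝ := (-1:ℝ)^m / (Nat.factorial m) with hc
  set L : ℝ := c * F (m+1) a / ((m:ℝ)+1) with hL
  have hm1 : ((m:ℝ)+1) ≠ 0 := by positivity
  rw [Metric.tendsto_nhdsWithin_nhds]
  intro ε hε
  set A : ℝ := |c| * ((m:ℝ)+1) with hA
  have hA0 : 0 ≤ A := by positivity
  set ε' : ℝ := ε / (2 * (A + 1)) with hε'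
  have hε'0 : 0 < ε' := by positivity
  -- little-o property of F m at a
  have hdm : HasDerivWithinAt (F m) (F (m+1) a) (Set.Icc a b) a :=
    hF m (by omega) a ⟨le_rfl, hab.le⟩
  have hlo := (hasDerivWithinAt_iff_isLittleO.1 hdm).def hε'0
  rw [Filter.eventually_iff, Metric.mem_nhdsWithin_iff] at hlo
  obtain ⟨δ, hδ0, hδ⟩ := hlo
  refine ⟨δ, hδ0, ?_⟩
  intro x hxI hxd
  have hax : a < x := hxI.1
  have hxb : x ≤ b := hxI.2
  have hX0 : 0 < x - a := sub_pos.2 hax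
  -- the remainder bound on [a, x]
  have hrt : ∀ t ∈ Set.Icc a x, |F m t - F m a - (t - a) * F (m+1) a| ≤ ε' * (t - a) := by
    intro t ht
    have htb : t ∈ Set.Icc a b := ⟨ht.1, ht.2.trans hxb⟩
    have htball : t ∈ Metric.ball a δ := by
      rw [Metric.mem_ball, Real.dist_eq, abs_of_nonneg (sub_nonneg.2 ht.1)]
      rw [Real.dist_eq, abs_of_nonneg (sub_nonneg.2 hax.le)] at hxd
      linarith [ht.2]
    have h' := hδ ⟨htball, htb⟩
    simp only [Set.mem_setOf_eq, smul_eq_mul, Real.norm_eq_abs] at h'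
    rwa [abs_of_nonneg (sub_nonneg.2 ht.1)] at h'
  -- auxiliary function D and its derivative
  set D : ℝ → ℝ := fun t => φ t - c * (t - a)^m * (F m t - F m a)
      + c * (m:ℝ) / ((m:ℝ)+1) * (t - a)^(m+1) * F (m+1) a with hD
  set D' : ℝ → ℝ := fun t => -(c * (m:ℝ)) * (t - a)^(m-1)
      * (F m t - F m a - (t - a) * F (m+1) a) with hD'
  have hDderiv : ∀ t ∈ Set.Icc a x, HasDerivWithinAt D (D' t) (Set.Icc a x) t := by
    intro t ht
    have htb : t ∈ Set.Icc a b := ⟨ht.1, ht.2.trans hxb⟩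
    have hsub : Set.Icc a x ⊆ Set.Icc a b := Set.Icc_subset_Icc le_rfl hxb
    have hφt := (hφ t htb).mono hsub
    have hFmt := (hF m (by omega) t htb).mono hsub
    have hpm : HasDerivWithinAt (fun y : ℝ => (y - a)^m) ((m:ℝ) * (t - a)^(m-1)) (Set.Icc a x) t := by
      have := (((hasDerivAt_id t).sub_const a).fun_pow m).hasDerivWithinAt (s := Set.Icc a x)
      simpa using this
    have hpm1 : HasDerivWithinAt (fun y : ℝ => (y - a)^(m+1)) (((m:ℝ)+1) * (t - a)^m) (Set.Icc a x) t := by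
      have := (((hasDerivAt_id t).sub_const a).fun_pow (m+1)).hasDerivWithinAt (s := Set.Icc a x)
      simpa using this
    have hprod : HasDerivWithinAt (fun y => c * (y - a)^m * (F m y - F m a))
        (c * ((m:ℝ) * (t - a)^(m-1)) * (F m t - F m a) + c * (t - a)^m * F (m+1) t)
        (Set.Icc a x) t := by
      exact (hpm.const_mul c).mul (hFmt.sub_const (F m a))
    have hlast : HasDerivWithinAt (fun y => c * (m:ℝ) / ((m:ℝ)+1) * (y - a)^(m+1) * F (m+1) a)
        (c * (m:ℝ) / ((m:ℝ)+1) * (((m:ℝ)+1) * (t - a)^m) * F (m+1) a) (Set.Icc a x) t := by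
      exact (hpm1.const_mul (c * (m:ℝ) / ((m:ℝ)+1))).mul_const (F (m+1) a)
    have hcomb := (hφt.sub hprod).add hlast
    have h1 := aux_pow1 m (t - a)
    have hs : c * (m:ℝ) / ((m:ℝ)+1) * (((m:ℝ)+1) * (t - a)^m) * F (m+1) a
        = c * ((m:ℝ) * (t - a)^(m-1) * (t - a)) * F (m+1) a := by
      rw [h1]
      field_simp
    have hval : φ' t - (c * ((m:ℝ) * (t - a)^(m-1)) * (F m t - F m a) + c * (t - a)^m * F (m+1) t)
        + c * (m:ℝ) / ((m:ℝ)+1) * (((m:ℝ)+1) * (t - a)^m) * F (m+1) a = D' t := by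
      rw [hs, hφ'def, hD']
      ring
    rw [← hval]
    exact hcomb
  -- bound on D'
  set K : ℝ := |c| * (m:ℝ) * (x - a)^(m-1) * (ε' * (x - a)) with hK
  have hbound : ∀ t ∈ Set.Icc a x, ‖D' t‖ ≤ K := by
    intro t ht
    have ht0 : 0 ≤ t - a := sub_nonneg.2 ht.1
    have htx : t - a ≤ x - a := by linarith [ht.2]
    have h1 : (t - a)^(m-1) ≤ (x - a)^(m-1) := pow_le_pow_left₀ ht0 htx _
    have h3 : |(m:ℝ)| = (m:ℝ) := abs_of_nonneg (Nat.cast_nonneg m)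
    have hrt' : |F m t - F m a - (t - a) * F (m+1) a| ≤ ε' * (x - a) := by
      have h2 := hrt t ht
      nlinarith
    rw [hD']
    simp only [Real.norm_eq_abs]
    rw [abs_mul, abs_mul, abs_neg, abs_mul, abs_pow, abs_of_nonneg ht0, h3, hK]
    gcongr
  -- MVT bound for D
  have hconv : Convex ℝ (Set.Icc a x) := convex_Icc a x
  have haI : a ∈ Set.Icc a x := ⟨le_rfl, hax.le⟩
  have hxI' : x ∈ Set.Icc a x := ⟨hax.le, le_rfl⟩
  have hMVT := Convex.norm_image_sub_le_of_norm_hasDerivWithin_le hDderiv hbound hconv haI hxI'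
  have hDa : D a = 0 := by
    rw [hD]
    simp only
    rw [hφdef]
    simp
  rw [hDa, sub_zero, Real.norm_eq_abs, Real.norm_eq_abs,
    abs_of_nonneg (sub_nonneg.2 hax.le)] at hMVT
  -- |D x| ≤ |c| * m * ε' * (x-a)^(m+1)
  have hDx : |D x| ≤ |c| * (m:ℝ) * ε' * (x - a)^(m+1) := by
    have h2 := aux_pow2 m (x - a)
    calc |D x| ≤ K * (x - a) := hMVT
      _ = |c| * ((m:ℝ) * (x - a)^(m-1) * (x-a)^2) * ε' := by rw [hK]; ring
      _ = |c| * ((m:ℝ) * (x - a)^(m+1)) * ε' := by rw [h2]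
      _ = |c| * (m:ℝ) * ε' * (x - a)^(m+1) := by ring
  -- decomposition
  have hdecomp : φ x - L * (x - a)^(m+1) = D x + c * (x - a)^m * (F m x - F m a - (x - a) * F (m+1) a) := by
    rw [hD, hL]
    simp only
    field_simp
    ring
  have hrx := hrt x hxI'
  have habs : |φ x - L * (x - a)^(m+1)| ≤ A * ε' * (x - a)^(m+1) := by
    rw [hdecomp]
    calc |D x + c * (x - a)^m * (F m x - F m a - (x - a) * F (m+1) a)|
        ≤ |D x| + |c * (x - a)^m| * |F m x - F m a - (x - a) * F (m+1) a| := by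
          rw [← abs_mul]; exact abs_add_le _ _
      _ ≤ |c| * (m:ℝ) * ε' * (x - a)^(m+1) + |c| * (x - a)^m * (ε' * (x - a)) := by
          apply add_le_add hDx
          rw [abs_mul, abs_pow, abs_of_nonneg hX0.le]
          apply mul_le_mul_of_nonneg_left hrx
          positivity
      _ = A * ε' * (x - a)^(m+1) := by rw [hA, pow_succ]; ring
  -- conclude
  have hpow0 : (0:ℝ) < (x - a)^(m+1) := by positivity
  rw [Real.dist_eq]
  have heq : φ x / (x - a)^(m+1) - L = (φ x - L * (x - a)^(m+1)) / (x - a)^(m+1) := by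
    field_simp
  rw [heq, abs_div, abs_of_nonneg hpow0.le]
  rw [div_lt_iff₀ hpow0]
  calc |φ x - L * (x - a)^(m+1)| ≤ A * ε' * (x - a)^(m+1) := habs
    _ < ε * (x - a)^(m+1) := by
        apply mul_lt_mul_of_pos_right _ hpow0
        rw [hε', mul_comm, div_mul_eq_mul_div, div_lt_iff₀ (by positivity : (0:ℝ) < 2 * (A + 1))]
        nlinarith


theorem flett_key (a b : ℝ) (hab : a < b) (m : ℕ) (φ φ' : ℝ → ℝ) (L : ℝ)
    (hφ : ∀ x ∈ Set.Icc a b, HasDerivWithinAt φ (φ' x) (Set.Icc a b) x)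
    (hlim : Filter.Tendsto (fun x => φ x / (x - a) ^ (m + 1))
      (nhdsWithin a (Set.Ioc a b)) (nhds L))
    (hb : φ' b = ((m : ℝ) + 1) * L * (b - a) ^ m) :
    ∃ η ∈ Set.Ioo a b, ((m : ℝ) + 1) * φ η = (η - a) * φ' η := by
  set ψ : ℝ → ℝ := fun x => if x = a then L else φ x / (x - a) ^ (m + 1) with hψdef
  set Ψ : ℝ → ℝ := fun x =>
    (φ' x * (x - a) ^ (m + 1) - φ x * (((m : ℝ) + 1) * (x - a) ^ m)) / ((x - a) ^ (m + 1)) ^ 2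
    with hΨdef
  have hψa : ψ a = L := by simp [hψdef]
  have hψeq : ∀ x : ℝ, x ≠ a → ψ x = φ x / (x - a) ^ (m + 1) := by
    intro x hx; simp [hψdef, hx]
  have hcφ : ContinuousOn φ (Icc a b) := fun x hx => (hφ x hx).continuousWithinAt
  -- continuity of ψ
  have hψcont : ContinuousOn ψ (Icc a b) := by
    intro x hx
    rcases eq_or_ne x a with rfl | hxa
    · -- at a
      unfold ContinuousWithinAt
      rw [hψa, ← Ioc_insert_left hab.le, nhdsWithin_insert, tendsto_sup]
      constructor
      · have := tendsto_pure_nhds ψ x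
        rwa [hψa] at this
      · refine hlim.congr' ?_
        filter_upwards [self_mem_nhdsWithin] with y hy
        exact (hψeq y (ne_of_gt hy.1)).symm
    · have hne : (x - a) ^ (m + 1) ≠ 0 := pow_ne_zero _ (sub_ne_zero.2 hxa)
      have hcont : ContinuousWithinAt (fun y => φ y / (y - a) ^ (m + 1)) (Icc a b) x :=
        (hcφ x hx).div (((continuous_id.sub continuous_const).pow _).continuousWithinAt) hne
      refine hcont.congr_of_eventuallyEq ?_ (hψeq x hxa)
      have : {y : ℝ | y ≠ a} ∈ nhdsWithin x (Icc a b) :=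
        mem_nhdsWithin_of_mem_nhds (isOpen_ne.mem_nhds hxa)
      filter_upwards [this] with y hy using hψeq y hy
  -- derivative of ψ within Icc at points ≠ a
  have hΨ : ∀ x ∈ Ioc a b, HasDerivWithinAt ψ (Ψ x) (Icc a b) x := by
    intro x hx
    have hxa : x ≠ a := ne_of_gt hx.1
    have hxI : x ∈ Icc a b := ⟨hx.1.le, hx.2⟩
    have hne : (x - a) ^ (m + 1) ≠ 0 := pow_ne_zero _ (sub_ne_zero.2 hxa)
    have hpow : HasDerivWithinAt (fun y : ℝ => (y - a) ^ (m + 1))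
        (((m : ℝ) + 1) * (x - a) ^ m) (Icc a b) x := by
      have h1 := (((hasDerivAt_id x).sub_const a).fun_pow (m + 1)).hasDerivWithinAt (s := Icc a b)
      simpa using h1
    have hdiv := (hφ x hxI).div hpow hne
    refine HasDerivWithinAt.congr_of_eventuallyEq hdiv ?_ (hψeq x hxa)
    have : {y : ℝ | y ≠ a} ∈ nhdsWithin x (Icc a b) :=
      mem_nhdsWithin_of_mem_nhds (isOpen_ne.mem_nhds hxa)
    filter_upwards [this] with y hy using hψeq y hy
  have hΨ' : ∀ x ∈ Ioo a b, HasDerivAt ψ (Ψ x) x := fun x hx =>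
    (hΨ x ⟨hx.1, hx.2.le⟩).hasDerivAt (Icc_mem_nhds hx.1 hx.2)
  have hba : b ≠ a := ne_of_gt hab
  have hbane : b - a ≠ 0 := sub_ne_zero.2 hba
  have hψb : ψ b = φ b / (b - a) ^ (m + 1) := hψeq b hba
  have hΨb : Ψ b = ((m : ℝ) + 1) * (L - ψ b) / (b - a) := by
    rw [hΨdef]
    simp only
    rw [hb, hψb]
    field_simp
    ring
  -- from Ψ η = 0 conclude
  have final : ∀ η ∈ Ioo a b, Ψ η = 0 → ((m : ℝ) + 1) * φ η = (η - a) * φ' η := by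
    intro η hη h0
    have hne : (η - a) ≠ 0 := sub_ne_zero.2 (ne_of_gt hη.1)
    have hnum : φ' η * (η - a) ^ (m + 1) - φ η * (((m : ℝ) + 1) * (η - a) ^ m) = 0 := by
      rw [hΨdef] at h0
      simp only at h0
      rcases div_eq_zero_iff.1 h0 with h | h
      · exact h
      · exact absurd h (pow_ne_zero _ (pow_ne_zero _ hne))
    have hmc : (((m : ℝ) + 1) * φ η) * (η - a) ^ m = ((η - a) * φ' η) * (η - a) ^ m := by
      rw [pow_succ] at hnum
      linear_combination -hnum
    exact mul_right_cancel₀ (pow_ne_zero m hne) hmc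
  -- filter at b from the left
  haveI hNB : (nhdsWithin b (Icc a b \ {b})).NeBot := by
    rw [Icc_sdiff_right]
    exact mem_closure_iff_nhdsWithin_neBot.1
      (by rw [closure_Ico hab.ne]; exact ⟨hab.le, le_rfl⟩)
  have hslope := hasDerivWithinAt_iff_tendsto_slope.1 (hΨ b ⟨hab, le_rfl⟩)
  have hmemev : ∀ᶠ y in nhdsWithin b (Icc a b \ {b}),
      y ∈ Icc a b \ {b} ∧ a < y := by
    filter_upwards [self_mem_nhdsWithin,
      mem_nhdsWithin_of_mem_nhds (Ioi_mem_nhds hab)] with y h1 h2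
    exact ⟨h1, h2⟩
  rcases lt_trichotomy (ψ b) L with hlt | heq | hgt
  · -- ψ b < L : Ψ b > 0, find point below b with smaller value, take min
    have hΨbpos : 0 < Ψ b := by
      rw [hΨb]
      apply div_pos _ (sub_pos.2 hab)
      have : (0:ℝ) < (m:ℝ) + 1 := by positivity
      nlinarith
    have hev : ∀ᶠ y in nhdsWithin b (Icc a b \ {b}), 0 < slope ψ b y :=
      hslope.eventually (eventually_gt_nhds hΨbpos)
    obtain ⟨y, hy1, ⟨hyI, hya⟩⟩ := (hev.and hmemev).exists
    have hyb : y < b := lt_of_le_of_ne hyI.1.2 hyI.2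
    have hψy : ψ y < ψ b := by
      rw [slope_def_field] at hy1
      rcases div_pos_iff.1 hy1 with ⟨h1, h2⟩ | ⟨h1, h2⟩
      · linarith
      · linarith
    obtain ⟨η, hηI, hmin⟩ := isCompact_Icc.exists_isMinOn (nonempty_Icc.2 hab.le) hψcont
    have hηa : η ≠ a := by
      intro h
      have := hmin ⟨hya.le, hyb.le⟩
      rw [h, hψa] at this
      simp only [Set.mem_setOf_eq] at this
      linarith
    have hηb : η ≠ b := by
      intro h
      have := hmin ⟨hya.le, hyb.le⟩
      rw [h] at this
      simp only [Set.mem_setOf_eq] at this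
      linarith
    have hη : η ∈ Ioo a b :=
      ⟨lt_of_le_of_ne hηI.1 (Ne.symm hηa), lt_of_le_of_ne hηI.2 hηb⟩
    have h0 : Ψ η = 0 :=
      (hmin.isLocalMin (Icc_mem_nhds hη.1 hη.2)).hasDerivAt_eq_zero (hΨ' η hη)
    exact ⟨η, hη, final η hη h0⟩
  · -- ψ b = L : Rolle
    obtain ⟨η, hη, h0⟩ := exists_hasDerivAt_eq_zero hab hψcont
      (by rw [hψa, heq]) hΨ'
    exact ⟨η, hη, final η hη h0⟩
  · -- L < ψ b : Ψ b < 0, find point below b with larger value, take max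
    have hΨbneg : Ψ b < 0 := by
      rw [hΨb]
      apply div_neg_of_neg_of_pos _ (sub_pos.2 hab)
      have : (0:ℝ) < (m:ℝ) + 1 := by positivity
      nlinarith
    have hev : ∀ᶠ y in nhdsWithin b (Icc a b \ {b}), slope ψ b y < 0 :=
      hslope.eventually (eventually_lt_nhds hΨbneg)
    obtain ⟨y, hy1, ⟨hyI, hya⟩⟩ := (hev.and hmemev).exists
    have hyb : y < b := lt_of_le_of_ne hyI.1.2 hyI.2
    have hψy : ψ b < ψ y := by
      rw [slope_def_field] at hy1
      rcases div_neg_iff.1 hy1 with ⟨h1, h2⟩ | ⟨h1, h2⟩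
      · linarith
      · linarith
    obtain ⟨η, hηI, hmax⟩ := isCompact_Icc.exists_isMaxOn (nonempty_Icc.2 hab.le) hψcont
    have hηa : η ≠ a := by
      intro h
      have := hmax ⟨hya.le, hyb.le⟩
      rw [h, hψa] at this
      simp only [Set.mem_setOf_eq] at this
      linarith
    have hηb : η ≠ b := by
      intro h
      have := hmax ⟨hya.le, hyb.le⟩
      rw [h] at this
      simp only [Set.mem_setOf_eq] at this
      linarith
    have hη : η ∈ Ioo a b :=
      ⟨lt_of_le_of_ne hηI.1 (Ne.symm hηa), lt_of_le_of_ne hηI.2 hηb⟩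
    have h0 : Ψ η = 0 :=
      (hmax.isLocalMax (Icc_mem_nhds hη.1 hη.2)).hasDerivAt_eq_zero (hΨ' η hη)
    exact ⟨η, hη, final η hη h0⟩


/-- **Pawlikowska's theorem** (higher-order Flett mean value theorem).
`F i` denotes the `i`-th derivative of `f = F 0`; `f` is `n`-times
differentiable on `[a,b]` and `F n a = F n b`. -/
theorem pawlikowska (a b : ℝ) (hab : a < b) (n : ℕ) (hn : 1 ≤ n)
    (F : ℕ → ℝ → ℝ)
    (hF : ∀ i < n, ∀ x ∈ Set.Icc a b,
      HasDerivWithinAt (F i) (F (i + 1) x) (Set.Icc a b) x)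
    (hends : F n a = F n b) :
    ∃ η ∈ Set.Ioo a b,
      F 0 η - F 0 a =
        ∑ i ∈ Finset.Icc 1 n,
          (-1 : ℝ) ^ (i + 1) / (Nat.factorial i) * (η - a) ^ i * F i η := by
  obtain ⟨m, rfl⟩ : ∃ m, n = m + 1 := ⟨n - 1, (Nat.succ_pred_eq_of_pos hn).symm⟩
  set c : ℝ := (-1:ℝ)^m / (Nat.factorial m) with hc
  set φ : ℝ → ℝ := fun x => F 0 x - F 0 a -
      ∑ j ∈ Finset.range m, (-1:ℝ)^j / (Nat.factorial (j+1)) * (x - a)^(j+1) * F (j+1) x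
    with hφdef
  set φ' : ℝ → ℝ := fun x => c * (x - a)^m * F (m+1) x with hφ'def
  have hφ : ∀ x ∈ Set.Icc a b, HasDerivWithinAt φ (φ' x) (Set.Icc a b) x :=
    fun x hx => phi_deriv a b m F hF x hx
  set L : ℝ := c * F (m+1) a / ((m:ℝ)+1) with hL
  have hlim : Filter.Tendsto (fun x => φ x / (x - a) ^ (m + 1)) (nhdsWithin a (Set.Ioc a b))
      (nhds L) := phi_lim a b hab m F hF φ φ' (fun x => rfl) (fun x => rfl) hφ
  have hm1 : ((m:ℝ)+1) ≠ 0 := by positivity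
  have hfm : (Nat.factorial m : ℝ) ≠ 0 := Nat.cast_ne_zero.2 (Nat.factorial_ne_zero m)
  have hb' : φ' b = ((m:ℝ)+1) * L * (b - a)^m := by
    rw [hφ'def, hL]
    simp only
    rw [← hends]
    field_simp
  obtain ⟨η, hη, hkey⟩ := flett_key a b hab m φ φ' L hφ hlim hb'
  refine ⟨η, hη, ?_⟩
  have hfac : ((Nat.factorial (m+1) : ℝ)) = ((m:ℝ)+1) * (Nat.factorial m) := by
    push_cast [Nat.factorial_succ]; ring
  have hfm1 : (Nat.factorial (m+1) : ℝ) ≠ 0 := Nat.cast_ne_zero.2 (Nat.factorial_ne_zero _)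
  have hφη : φ η = (-1:ℝ)^m / (Nat.factorial (m+1)) * (η - a)^(m+1) * F (m+1) η := by
    have h2 : φ η = (η - a) * φ' η / ((m:ℝ)+1) := by
      field_simp
      linear_combination hkey
    rw [h2, hφ'def]
    simp only
    rw [hc]
    field_simp [hfac]
    push_cast [Nat.factorial_succ]
    ring
  rw [← Finset.Ico_add_one_right_eq_Icc, Finset.sum_Ico_eq_sum_range]
  have hmm : m + 1 + 1 - 1 = m + 1 := rfl
  rw [hmm, Finset.sum_range_succ]
  have hsum : ∀ j ∈ Finset.range m,
      ((-1:ℝ)^(1+j+1) / (Nat.factorial (1+j)) * (η - a)^(1+j) * F (1+j) η)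
        = (-1:ℝ)^j / (Nat.factorial (j+1)) * (η - a)^(j+1) * F (j+1) η := by
    intro j _
    have h1 : 1 + j = j + 1 := by omega
    rw [h1]
    have h2 : (-1:ℝ)^(j+1+1) = (-1:ℝ)^j := by
      rw [pow_succ, pow_succ]; ring
    rw [h2]
  rw [Finset.sum_congr rfl hsum]
  have hg : (-1:ℝ)^(1+m+1) / (Nat.factorial (1+m)) * (η - a)^(1+m) * F (1+m) η = φ η := by
    rw [hφη]
    have h1 : 1 + m = m + 1 := by omega
    rw [h1]
    have h2 : (-1:ℝ)^(m+1+1) = (-1:ℝ)^m := by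
      rw [pow_succ, pow_succ]; ring
    rw [h2]
  rw [hg, hφdef]
  simp only
  ring
end

section
/- Pawlikowska's theorem restated via Taylor polynomials: Let a < b be real numbers, let n ≥ 1, and let f : [a,b] → ℝ be n-times differentiable on [a,b] with f⁽ⁿ⁾(a) = f⁽ⁿ⁾(b). Then there exists η ∈ (a,b) such that f(a) = T_n(f, η)(a), where T_n(f, x₀)(x) is the n-th Taylor polynomial of f at x₀. -/
open Finset Asymptotics Filter Set

section PawlikowskaAux

lemma alt_sum (M : ℕ) (hM : 1 ≤ M) :
    ∑ k ∈ range M, (-1:ℝ)^k / (k.factorial * (M-k).factorial) = (-1)^(M+1) / M.factorial := by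
  have h1 : ∀ k ∈ range M, (-1:ℝ)^k / (k.factorial * (M-k).factorial)
      = (-1)^k * (M.choose k) / M.factorial := by
    intro k hk
    have hk' : k ≤ M := (mem_range.mp hk).le
    have h2 : (M.choose k : ℝ) * k.factorial * (M-k).factorial = M.factorial := by
      exact_mod_cast congrArg (Nat.cast (R := ℝ)) (Nat.choose_mul_factorial_mul_factorial hk')
    rw [div_eq_div_iff (by positivity) (by positivity)]
    linear_combination (-(-1:ℝ)^k) * h2
  rw [Finset.sum_congr rfl h1, ← Finset.sum_div]
  congr 1
  obtain ⟨N, rfl⟩ : ∃ N, M = N + 1 := ⟨M - 1, by omega⟩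
  have h3 : (∑ k ∈ range (N+2), (-1:ℝ)^k * ((N+1).choose k)) = 0 := by
    exact_mod_cast Int.alternating_sum_range_choose_of_ne (n := N+1) (by omega)
  have h4 := Finset.sum_range_succ (fun k => (-1:ℝ)^k * ((N+1).choose k)) (N+1)
  rw [h4] at h3
  simp at h3 ⊢
  linear_combination h3

lemma ds (G : ℕ → ℝ) (t : ℝ) : ∀ m : ℕ,
    ∑ k ∈ range (m+1), (-1:ℝ)^k * t^k / k.factorial *
      (∑ j ∈ range (m+2-k), G (k+j) * t^j / j.factorial)
    = G 0 + (-1)^m * G (m+1) / (m+1).factorial * t^(m+1) := by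
  intro m
  induction m with
  | zero => simp [Finset.sum_range_succ, Nat.factorial]
  | succ m ih =>
    rw [Finset.sum_range_succ]
    have h2 : ∀ k ∈ range (m+1),
        (-1:ℝ)^k * t^k / k.factorial * (∑ j ∈ range (m+1+2-k), G (k+j) * t^j / j.factorial)
        = (-1:ℝ)^k * t^k / k.factorial * (∑ j ∈ range (m+2-k), G (k+j) * t^j / j.factorial)
          + ((-1:ℝ)^k / (k.factorial * (m+2-k).factorial)) * (G (m+2) * t^(m+2)) := by
      intro k hk
      have hk' : k ≤ m := Nat.lt_succ_iff.mp (mem_range.mp hk)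
      have h3 : m+1+2-k = (m+2-k)+1 := by omega
      rw [h3, Finset.sum_range_succ, mul_add]
      congr 1
      have h4 : k + (m+2-k) = m+2 := by omega
      rw [h4]
      have h5 : t^k * t^(m+2-k) = t^(m+2) := by rw [← pow_add, show k + (m+2-k) = m+2 by omega]
      have hkf : (k.factorial : ℝ) ≠ 0 := by positivity
      have hmf : (((m+2-k).factorial : ℕ) : ℝ) ≠ 0 := by positivity
      field_simp
      linear_combination G (m+2) * h5
    rw [Finset.sum_congr rfl h2, Finset.sum_add_distrib, ih, ← Finset.sum_mul]
    have h6 : ∑ k ∈ range (m+1), (-1:ℝ)^k / (k.factorial * (m+2-k).factorial)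
        = (-1)^(m+3) / (m+2).factorial - (-1)^(m+1) / ((m+1).factorial * 1) := by
      have h7 := alt_sum (m+2) (by omega)
      rw [Finset.sum_range_succ] at h7
      have h8 : m + 2 - (m+1) = 1 := by omega
      rw [h8] at h7
      simp [Nat.factorial] at h7 ⊢
      linarith [h7]
    rw [h6]
    have h9 : m+1+2-(m+1) = 2 := by omega
    rw [h9]
    have hf2 : ((m+2).factorial : ℝ) = (m+2) * (m+1).factorial := by
      exact_mod_cast congrArg (Nat.cast (R := ℝ)) (Nat.factorial_succ (m+1))
    simp [Finset.sum_range_succ, Nat.factorial]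
    have hmf1 : ((m+1).factorial : ℝ) ≠ 0 := by positivity
    have hmf2 : ((m+2).factorial : ℝ) ≠ 0 := by positivity
    field_simp [hf2]
    ring

lemma poly_deriv (a : ℝ) (c : ℕ → ℝ) (N : ℕ) (x : ℝ) :
    HasDerivAt (fun y => ∑ j ∈ range (N+1), c j * (y-a)^j / j.factorial)
      (∑ j ∈ range N, c (j+1) * (x-a)^j / j.factorial) x := by
  have h1 : HasDerivAt (fun y => ∑ j ∈ range (N+1), c j * (y-a)^j / j.factorial)
      (∑ j ∈ range (N+1), c j * ((j:ℝ) * (x-a)^(j-1)) / j.factorial) x := by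
    apply HasDerivAt.fun_sum
    intro j hj
    have := (((hasDerivAt_id x).sub_const a).pow j).const_mul (c j)
    simpa [mul_comm, mul_assoc, mul_left_comm] using this.div_const (j.factorial : ℝ)
  convert h1 using 1
  rw [Finset.sum_range_succ' (fun j => c j * ((j:ℝ) * (x-a)^(j-1)) / j.factorial) N]
  simp only [Nat.cast_zero, zero_mul, mul_zero, zero_div, add_zero, Nat.cast_ofNat]
  apply Finset.sum_congr rfl
  intro j hj
  have hf : ((j+1).factorial : ℝ) = (j+1) * j.factorial := by
    exact_mod_cast congrArg (Nat.cast (R := ℝ)) (Nat.factorial_succ j)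
  have hj1 : ((j:ℝ)+1) ≠ 0 := by positivity
  have hjf : (j.factorial : ℝ) ≠ 0 := by positivity
  simp only [Nat.add_sub_cancel, Nat.cast_add, Nat.cast_one, hf]
  field_simp [hf]

lemma ty (a b : ℝ) (hab : a < b) : ∀ n : ℕ, 1 ≤ n → ∀ F : ℕ → ℝ → ℝ,
    (∀ i < n, ∀ x ∈ Set.Icc a b, HasDerivWithinAt (F i) (F (i+1) x) (Set.Icc a b) x) →
    (fun x => F 0 x - ∑ j ∈ range (n+1), F j a * (x-a)^j / j.factorial)
      =o[nhdsWithin a (Set.Icc a b)] fun x => (x-a)^n := by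
  intro n hn
  induction n, hn using Nat.le_induction with
  | base =>
    intro F hF
    have h := (hF 0 (by norm_num) a ⟨le_refl a, le_of_lt hab⟩)
    rw [hasDerivWithinAt_iff_isLittleO] at h
    have e1 : (fun x => F 0 x - ∑ j ∈ range 2, F j a * (x-a)^j / j.factorial)
        = fun x => F 0 x - F 0 a - (x - a) • F 1 a := by
      funext x; simp [Finset.sum_range_succ, Nat.factorial]; ring
    have e2 : (fun x : ℝ => (x-a)^1) = fun x => x - a := by funext x; simp
    rw [e1, e2]; exact h
  | succ n hn ih =>
    intro F hF
    set G : ℝ → ℝ := fun x => F 0 x - ∑ j ∈ range (n+2), F j a * (x-a)^j / j.factorial with hG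
    set g : ℝ → ℝ := fun x => F 1 x - ∑ j ∈ range (n+1), F (j+1) a * (x-a)^j / j.factorial with hg
    have hGa : G a = 0 := by
      simp only [hG]
      rw [Finset.sum_eq_single 0]
      · simp
      · intro j _ hj; simp [zero_pow hj]
      · intro h; simp at h
    have hg_lo : g =o[nhdsWithin a (Set.Icc a b)] fun x => (x-a)^n := by
      have := ih (fun i => F (i+1)) (fun i hi x hx => hF (i+1) (by omega) x hx)
      exact this
    have hG' : ∀ x ∈ Set.Icc a b, HasDerivWithinAt G (g x) (Set.Icc a b) x := by
      intro x hx
      exact (hF 0 (by omega) x hx).sub ((poly_deriv a (fun j => F j a) (n+1) x).hasDerivWithinAt)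
    rw [isLittleO_iff]
    intro c hc
    have hgc := isLittleO_iff.mp hg_lo hc
    rw [eventually_nhdsWithin_iff, Metric.eventually_nhds_iff] at hgc ⊢
    obtain ⟨δ, hδ, hδ2⟩ := hgc
    refine ⟨δ, hδ, ?_⟩
    intro x hxd hx
    have hax : a ≤ x := hx.1
    have hdist : x - a < δ := by
      have : dist x a = |x - a| := Real.dist_eq x a
      rw [this, abs_of_nonneg (by linarith)] at hxd
      exact hxd
    have sub : Set.Icc a x ⊆ Set.Icc a b := Set.Icc_subset_Icc le_rfl hx.2
    have hB : ∀ t ∈ Set.Icc a x, ‖g t‖ ≤ c * (x-a)^n := by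
      intro t ht
      have h1 : ‖g t‖ ≤ c * ‖(t-a)^n‖ := by
        apply hδ2 ?_ (sub ht)
        rw [Real.dist_eq, abs_of_nonneg (by linarith [ht.1])]
        linarith [ht.2]
      have h2 : ‖(t-a)^n‖ ≤ (x-a)^n := by
        rw [Real.norm_eq_abs, abs_pow, abs_of_nonneg (by linarith [ht.1])]
        exact pow_le_pow_left₀ (by linarith [ht.1]) (by linarith [ht.2]) n
      calc ‖g t‖ ≤ c * ‖(t-a)^n‖ := h1
        _ ≤ c * (x-a)^n := by nlinarith [norm_nonneg ((t-a)^n)]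
    have hmvt := Convex.norm_image_sub_le_of_norm_hasDerivWithin_le
      (fun t ht => (hG' t (sub ht)).mono sub) hB (convex_Icc a x)
      (Set.left_mem_Icc.2 hax) (Set.right_mem_Icc.2 hax)
    rw [hGa, sub_zero] at hmvt
    calc ‖G x‖ ≤ c * (x-a)^n * ‖x - a‖ := hmvt
      _ = c * ‖(x-a)^(n+1)‖ := by
          rw [Real.norm_eq_abs, Real.norm_eq_abs, abs_of_nonneg (by linarith),
            abs_of_nonneg (pow_nonneg (by linarith) _)]
          ring

lemma psi_deriv (a b : ℝ) (m : ℕ) (F : ℕ → ℝ → ℝ)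
    (hF : ∀ i < m+1, ∀ x ∈ Set.Icc a b, HasDerivWithinAt (F i) (F (i+1) x) (Set.Icc a b) x)
    (x : ℝ) (hx : x ∈ Set.Icc a b) :
    HasDerivWithinAt (fun y => ∑ k ∈ range (m+1), (-1:ℝ)^k * (y-a)^k / k.factorial * F k y)
      ((-1)^m * (x-a)^m / m.factorial * F (m+1) x) (Set.Icc a b) x := by
  have hterm : ∀ k ∈ range (m+1), HasDerivWithinAt
      (fun y => (-1:ℝ)^k * (y-a)^k / k.factorial * F k y)
      ((-1:ℝ)^k * ((k:ℝ) * (x-a)^(k-1)) / k.factorial * F k x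
        + (-1:ℝ)^k * (x-a)^k / k.factorial * F (k+1) x) (Set.Icc a b) x := by
    intro k hk
    have hu : HasDerivWithinAt (fun y => (-1:ℝ)^k * (y-a)^k / k.factorial)
        ((-1:ℝ)^k * ((k:ℝ) * (x-a)^(k-1)) / k.factorial) (Set.Icc a b) x := by
      have := ((((hasDerivAt_id x).sub_const a).pow k).const_mul ((-1:ℝ)^k)).div_const
        (k.factorial : ℝ)
      simpa [mul_comm, mul_assoc, mul_left_comm] using this.hasDerivWithinAt
    exact hu.mul (hF k (mem_range.mp hk) x hx)
  have hsum := HasDerivWithinAt.fun_sum (fun k hk => hterm k hk)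
  refine hsum.congr_deriv ?_
  set w : ℕ → ℝ := fun k => match k with
    | 0 => 0
    | (j+1) => (-1:ℝ)^j * (x-a)^j / j.factorial * F (j+1) x with hw
  have htel : ∀ k ∈ range (m+1),
      ((-1:ℝ)^k * ((k:ℝ) * (x-a)^(k-1)) / k.factorial * F k x
        + (-1:ℝ)^k * (x-a)^k / k.factorial * F (k+1) x) = w (k+1) - w k := by
    intro k hk
    match k with
    | 0 => simp [hw]
    | (j+1) =>
      show _ = (-1:ℝ)^(j+1) * (x-a)^(j+1) / (j+1).factorial * F (j+2) x
        - (-1:ℝ)^j * (x-a)^j / j.factorial * F (j+1) x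
      have hf : ((j+1).factorial : ℝ) = (j+1) * j.factorial := by
        exact_mod_cast congrArg (Nat.cast (R := ℝ)) (Nat.factorial_succ j)
      have hjf : (j.factorial : ℝ) ≠ 0 := by positivity
      have hj1 : ((j:ℝ)+1) ≠ 0 := by positivity
      simp only [Nat.add_sub_cancel, Nat.cast_add, Nat.cast_one]
      rw [hf]
      field_simp [hf]
      ring
  rw [Finset.sum_congr rfl htel, Finset.sum_range_sub w]
  simp [hw]

lemma aux_max (a b : ℝ) (hab : a < b) (Q D : ℝ → ℝ)
    (hc : ContinuousOn Q (Set.Icc a b))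
    (hd : ∀ x ∈ Set.Ioo a b, HasDerivAt Q (D x) x)
    (hdb : HasDerivWithinAt Q (D b) (Set.Icc a b) b)
    (h1 : Q a < Q b) (h2 : D b < 0) : ∃ η ∈ Set.Ioo a b, D η = 0 := by
  have hsub : Set.Ioo a b ⊆ Set.Icc a b \ {b} := fun y hy =>
    ⟨⟨hy.1.le, hy.2.le⟩, ne_of_lt hy.2⟩
  have hslope : Tendsto (slope Q b) (nhdsWithin b (Set.Ioo a b)) (nhds (D b)) :=
    (hasDerivWithinAt_iff_tendsto_slope.mp hdb).mono_left (nhdsWithin_mono b hsub)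
  have hev : ∀ᶠ y in nhdsWithin b (Set.Ioo a b), slope Q b y < 0 :=
    hslope.eventually_lt_const h2
  haveI : (nhdsWithin b (Set.Ioo a b)).NeBot := right_nhdsWithin_Ioo_neBot hab
  obtain ⟨y, hymem, hyslope⟩ := (eventually_mem_nhdsWithin.and hev).exists
  have hyb : Q b < Q y := by
    have hylt : y - b < 0 := by linarith [hymem.2]
    rw [slope_def_field] at hyslope
    have := (div_neg_iff).mp hyslope
    rcases this with ⟨hp, hq⟩ | ⟨hp, hq⟩
    · linarith
    · linarith
  obtain ⟨η, hη, hmax⟩ := IsCompact.exists_isMaxOn isCompact_Icc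
    (Set.nonempty_Icc.2 hab.le) hc
  have hQη : Q y ≤ Q η := hmax ⟨hymem.1.le, hymem.2.le⟩
  have hηa : η ≠ a := by rintro rfl; linarith
  have hηb : η ≠ b := by rintro rfl; linarith
  have hηIoo : η ∈ Set.Ioo a b := ⟨lt_of_le_of_ne hη.1 (Ne.symm hηa), lt_of_le_of_ne hη.2 hηb⟩
  have hloc : IsLocalMax Q η := hmax.isLocalMax (Icc_mem_nhds hηIoo.1 hηIoo.2)
  exact ⟨η, hηIoo, hloc.hasDerivAt_eq_zero (hd η hηIoo)⟩

end PawlikowskaAux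

/-- The `n`-th Taylor polynomial of a function with derivative family `F`
(`F i` is the `i`-th derivative of `F 0`), centered at `x₀`, evaluated at `x`:
`T_n(f, x₀)(x) = ∑_{i=0}^{n} f⁽ⁱ⁾(x₀)/i! * (x - x₀)^i`. -/
noncomputable def taylorPoly (F : ℕ → ℝ → ℝ) (n : ℕ) (x₀ x : ℝ) : ℝ :=
  ∑ i ∈ Finset.range (n + 1), F i x₀ / (Nat.factorial i) * (x - x₀) ^ i

/-- **Pawlikowska's theorem restated via Taylor polynomials.** -/
theorem pawlikowska_taylor (a b : ℝ) (hab : a < b) (n : ℕ) (hn : 1 ≤ n)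
    (F : ℕ → ℝ → ℝ)
    (hF : ∀ i < n, ∀ x ∈ Set.Icc a b,
      HasDerivWithinAt (F i) (F (i + 1) x) (Set.Icc a b) x)
    (hends : F n a = F n b) :
    ∃ η ∈ Set.Ioo a b, F 0 a = taylorPoly F n η a := by
  obtain ⟨m, rfl⟩ : ∃ m, n = m + 1 := ⟨n - 1, by omega⟩
  set ψ : ℝ → ℝ := fun x => ∑ k ∈ range (m+1), (-1:ℝ)^k * (x-a)^k / k.factorial * F k x
    with hψdef
  have hψ : ∀ x ∈ Set.Icc a b, HasDerivWithinAt ψ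
      ((-1)^m * (x-a)^m / m.factorial * F (m+1) x) (Set.Icc a b) x := psi_deriv a b m F hF
  have hψa : ψ a = F 0 a := by
    simp only [hψdef]
    rw [Finset.sum_eq_single 0]
    · simp
    · intro j _ hj; simp [zero_pow hj]
    · intro h; simp at h
  set L : ℝ := (-1:ℝ)^m * F (m+1) a / (m+1).factorial with hL
  have hf1 : ((m+1).factorial : ℝ) = ((m:ℝ)+1) * m.factorial := by
    exact_mod_cast congrArg (Nat.cast (R := ℝ)) (Nat.factorial_succ m)
  have hmf : (m.factorial : ℝ) ≠ 0 := by positivity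
  -- the little-o fact
  have hR : (fun x => ψ x - F 0 a - L * (x-a)^(m+1))
      =o[nhdsWithin a (Set.Icc a b)] fun x => (x-a)^(m+1) := by
    have hsum : ∀ x : ℝ, ψ x - F 0 a - L * (x-a)^(m+1)
        = ∑ k ∈ range (m+1), ((-1:ℝ)^k * (x-a)^k / k.factorial *
            (F k x - ∑ j ∈ range (m+2-k), F (k+j) a * (x-a)^j / j.factorial)) := by
      intro x
      have hds := ds (fun i => F i a) (x-a) m
      have h1 : ∑ k ∈ range (m+1), ((-1:ℝ)^k * (x-a)^k / k.factorial *
            (F k x - ∑ j ∈ range (m+2-k), F (k+j) a * (x-a)^j / j.factorial))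
          = ψ x - ∑ k ∈ range (m+1), ((-1:ℝ)^k * (x-a)^k / k.factorial *
              ∑ j ∈ range (m+2-k), F (k+j) a * (x-a)^j / j.factorial) := by
        rw [hψdef, ← Finset.sum_sub_distrib]
        exact Finset.sum_congr rfl fun k _ => mul_sub _ _ _
      have h2 : ∑ k ∈ range (m+1), ((-1:ℝ)^k * (x-a)^k / k.factorial *
              ∑ j ∈ range (m+2-k), F (k+j) a * (x-a)^j / j.factorial)
          = F 0 a + (-1)^m * F (m+1) a / (m+1).factorial * (x-a)^(m+1) := hds
      rw [h1, h2, hL]; ring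
    have hlo : ∀ k ∈ range (m+1), (fun x => (-1:ℝ)^k * (x-a)^k / k.factorial *
        (F k x - ∑ j ∈ range (m+2-k), F (k+j) a * (x-a)^j / j.factorial))
        =o[nhdsWithin a (Set.Icc a b)] fun x => (x-a)^(m+1) := by
      intro k hk
      have hk' : k ≤ m := Nat.lt_succ_iff.mp (mem_range.mp hk)
      have hty := ty a b hab (m+1-k) (by omega) (fun i => F (k+i))
        (fun i hi x hx => hF (k+i) (by omega) x hx)
      rw [show m+1-k+1 = m+2-k by omega] at hty
      have hbig := (isBigO_refl (fun x : ℝ => (x-a)^k)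
        (nhdsWithin a (Set.Icc a b))).const_mul_left ((-1:ℝ)^k / k.factorial)
      have hmul := hbig.mul_isLittleO hty
      have e2 : (fun x : ℝ => (x-a)^k * (x-a)^(m+1-k)) = fun x => (x-a)^(m+1) := by
        funext x; rw [← pow_add, show k + (m+1-k) = m+1 by omega]
      rw [e2] at hmul
      refine hmul.congr_left fun x => ?_
      ring
    have hsumlo := Asymptotics.IsLittleO.fun_sum hlo
    exact hsumlo.congr_left fun x => (hsum x).symm
  -- definitions
  set N : ℝ → ℝ := fun x => ψ x - ψ a with hNdef
  set den : ℝ → ℝ := fun x => (x-a)^(m+1) with hdendef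
  set Q : ℝ → ℝ := fun x => if x = a then L else N x / den x with hQdef
  set Dfun : ℝ → ℝ := fun x =>
    ((-1:ℝ)^m * (x-a)^m / m.factorial * F (m+1) x * den x
      - N x * (((m:ℝ)+1) * (x-a)^m)) / (den x)^2 with hDdef
  have hQa : Q a = L := by simp [hQdef]
  have hQne : ∀ x : ℝ, x ≠ a → Q x = N x / den x := by
    intro x hx; simp [hQdef, hx]
  have hden : ∀ x : ℝ, a < x → den x ≠ 0 := by
    intro x hx; simp only [hdendef]; exact pow_ne_zero _ (sub_ne_zero.2 (ne_of_gt hx))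
  have hψc : ContinuousOn ψ (Set.Icc a b) := fun x hx => (hψ x hx).continuousWithinAt
  -- continuity of Q
  have hQcont : ContinuousOn Q (Set.Icc a b) := by
    intro x hx
    rcases eq_or_ne x a with hxa | hxa
    · subst hxa
      have hdiv : Tendsto (fun y => (ψ y - F 0 x - L*(y-x)^(m+1))/(y-x)^(m+1) + L)
          (nhdsWithin x (Set.Icc x b \ {x})) (nhds L) := by
        have h0 := hR.tendsto_div_nhds_zero
        have h0' := h0.mono_left (nhdsWithin_mono x (s := Set.Icc x b \ {x}) Set.diff_subset)
        simpa using h0'.add (tendsto_const_nhds (x := L))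
      have hT : Tendsto Q (nhdsWithin x (Set.Icc x b \ {x})) (nhds (Q x)) := by
        rw [hQa]
        refine hdiv.congr' ?_
        filter_upwards [self_mem_nhdsWithin] with y hy
        have hya : y ≠ x := hy.2
        have hyx : x < y := lt_of_le_of_ne hy.1.1 (Ne.symm hya)
        have hyne : y - x ≠ 0 := sub_ne_zero.2 hya
        rw [hQne y hya, hNdef, hdendef, hψa]
        field_simp
        ring
      exact continuousWithinAt_diff_self.mp hT
    · have hax : a < x := lt_of_le_of_ne hx.1 (Ne.symm hxa)
      have hquot : ContinuousWithinAt (fun y => N y / den y) (Set.Icc a b) x := by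
        apply ContinuousWithinAt.div
        · exact (hψc x hx).sub continuousWithinAt_const
        · exact Continuous.continuousWithinAt (by fun_prop)
        · exact hden x hax
      apply hquot.congr_of_eventuallyEq ?_ (hQne x hxa)
      filter_upwards [mem_nhdsWithin_of_mem_nhds (isOpen_Ioi.mem_nhds hax)] with y hy
      exact hQne y (ne_of_gt hy)
  -- derivative of Q on Ioo
  have hQD : ∀ η ∈ Set.Ioo a b, HasDerivAt Q (Dfun η) η := by
    intro η hη
    have hmem : Set.Icc a b ∈ nhds η := Icc_mem_nhds hη.1 hη.2
    have hψη : HasDerivAt ψ ((-1)^m * (η-a)^m / m.factorial * F (m+1) η) η :=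
      (hψ η (Set.Ioo_subset_Icc_self hη)).hasDerivAt hmem
    have hNη : HasDerivAt N ((-1)^m * (η-a)^m / m.factorial * F (m+1) η) η :=
      hψη.sub_const (ψ a)
    have hdenη : HasDerivAt den (((m:ℝ)+1) * (η-a)^m) η := by
      have := ((hasDerivAt_id η).sub_const a).pow (m+1)
      exact this.congr_deriv (by simp)
    have hq := hNη.div hdenη (hden η hη.1)
    apply hq.congr_of_eventuallyEq
    filter_upwards [isOpen_Ioi.mem_nhds hη.1] with y hy
    exact hQne y (ne_of_gt hy)
  -- derivative of Q at b within Icc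
  have hQDb : HasDerivWithinAt Q (Dfun b) (Set.Icc a b) b := by
    have hbmem : b ∈ Set.Icc a b := ⟨hab.le, le_rfl⟩
    have hNb : HasDerivWithinAt N ((-1)^m * (b-a)^m / m.factorial * F (m+1) b)
        (Set.Icc a b) b := (hψ b hbmem).sub_const (ψ a)
    have hdenb : HasDerivWithinAt den (((m:ℝ)+1) * (b-a)^m) (Set.Icc a b) b := by
      have := ((hasDerivAt_id b).sub_const a).pow (m+1)
      exact (this.congr_deriv (by simp) : HasDerivAt den (((m:ℝ)+1) * (b-a)^m) b).hasDerivWithinAt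
    have hq := hNb.div hdenb (hden b hab)
    apply hq.congr_of_eventuallyEq ?_ (hQne b (ne_of_gt hab))
    filter_upwards [mem_nhdsWithin_of_mem_nhds (isOpen_Ioi.mem_nhds hab)] with y hy
    exact hQne y (ne_of_gt hy)
  -- value of Dfun b
  have hbne : b - a ≠ 0 := sub_ne_zero.2 (ne_of_gt hab)
  have hDb : Dfun b = ((m:ℝ)+1) * (L - Q b) / (b - a) := by
    have hQb : Q b = N b / den b := hQne b (ne_of_gt hab)
    have hkey : (-1:ℝ)^m * (b-a)^m / m.factorial * F (m+1) b
        = ((m:ℝ)+1) * L * (b-a)^m := by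
      rw [← hends, hL, hf1]
      field_simp
    rw [hDdef]
    simp only [hkey, hQb, hdendef, hNdef]
    have hd1 : (b-a)^(m+1) ≠ 0 := pow_ne_zero _ hbne
    field_simp
    ring
  -- final extraction
  have final : ∀ η ∈ Set.Ioo a b, Dfun η = 0 → F 0 a = taylorPoly F (m+1) η a := by
    intro η hη hD0
    have ht : η - a ≠ 0 := sub_ne_zero.2 (ne_of_gt hη.1)
    have hdenη : den η ≠ 0 := hden η hη.1
    rw [hDdef] at hD0
    have hnum : (-1:ℝ)^m * (η-a)^m / m.factorial * F (m+1) η * den η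
        - N η * (((m:ℝ)+1) * (η-a)^m) = 0 :=
      (div_eq_zero_iff.mp hD0).resolve_right (pow_ne_zero 2 hdenη)
    rw [hNdef, hdendef] at hnum
    have E2 : ψ η - ψ a = (-1:ℝ)^m * (η-a)^(m+1) / (m+1).factorial * F (m+1) η := by
      apply mul_right_cancel₀ (pow_ne_zero m ht)
      rw [hf1]
      have hm1 : ((m:ℝ)+1) ≠ 0 := by positivity
      field_simp at hnum ⊢
      have hnum2 := (mul_eq_zero.mp (hnum.trans (mul_zero _))).resolve_left (pow_ne_zero m ht)
      linear_combination (-(1:ℝ)) * hnum2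
    rw [taylorPoly, Finset.sum_range_succ]
    have hsum_eq : ∑ i ∈ range (m+1), F i η / i.factorial * (a - η)^i = ψ η := by
      rw [hψdef]
      apply Finset.sum_congr rfl
      intro i hi
      rw [show a - η = -(η - a) by ring, neg_pow]
      ring
    rw [hsum_eq, show a - η = -(η - a) by ring, neg_pow, ← hψa]
    linear_combination -E2
  -- case analysis
  rcases lt_trichotomy (Q b) L with hlt | heq | hgt
  · have hpos : 0 < Dfun b := by
      rw [hDb]
      apply div_pos _ (by linarith)
      have : (0:ℝ) < (m:ℝ)+1 := by positivity
      nlinarith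
    obtain ⟨η, hη, hd0⟩ := aux_max a b hab (fun x => -Q x) (fun x => -Dfun x)
      hQcont.neg (fun x hx => (hQD x hx).neg) hQDb.neg
      (by simp only [neg_lt_neg_iff]; rw [hQa]; exact hlt) (by simpa using hpos)
    exact ⟨η, hη, final η hη (by simpa using hd0)⟩
  · obtain ⟨η, hη, hd0⟩ := exists_hasDerivAt_eq_zero hab hQcont
      (hQa.trans heq.symm) hQD
    exact ⟨η, hη, final η hη hd0⟩
  · have hneg : Dfun b < 0 := by
      rw [hDb]
      apply div_neg_of_neg_of_pos _ (by linarith)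
      have : (0:ℝ) < (m:ℝ)+1 := by positivity
      nlinarith
    obtain ⟨η, hη, hd0⟩ := aux_max a b hab Q Dfun hQcont hQD hQDb
      (by rw [hQa]; exact hgt) hneg
    exact ⟨η, hη, final η hη hd0⟩
end

section
/- Higher-order Flett theorem without the endpoint condition: Let a < b be real numbers, let n ≥ 1, and let f : [a,b] → ℝ be n-times differentiable on [a,b]. Then there exists η ∈ (a,b) such that f(a) = T_n(f, η)(a) + ((a - η)^{n+1}/(n+1)!) · (f⁽ⁿ⁾(b) - f⁽ⁿ⁾(a))/(b - a), where T_n(f, x₀)(x) is the n-th Taylor polynomial of f at x₀. -/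
open Set Filter Topology Finset


lemma flett_aux_s4 (a b : ℝ) (hab : a < b) (N : ℝ) (hN : 0 < N) (w w' : ℝ → ℝ)
    (hwc : ContinuousOn w (Set.Icc a b))
    (hwd : ∀ x ∈ Set.Ioo a b, HasDerivAt w (w' x) x)
    (hwb : HasDerivWithinAt w (w' b) (Set.Ioc a b) b)
    (hkey : w' b = N * (w a - w b) / (b - a))
    (hlt : w a < w b) :
    ∃ η ∈ Set.Ioo a b, w' η = 0 := by
  have hb' : w' b < 0 := by
    rw [hkey]
    exact div_neg_of_neg_of_pos (mul_neg_of_pos_of_neg hN (sub_neg.mpr hlt)) (sub_pos.mpr hab)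
  haveI : (𝓝[Set.Ioo a b] b).NeBot := by
    rw [nhdsWithin_Ioo_eq_nhdsLT hab]; infer_instance
  have htend : Tendsto (slope w b) (𝓝[Set.Ioo a b] b) (𝓝 (w' b)) :=
    (hasDerivWithinAt_iff_tendsto_slope.mp hwb).mono_left
      (nhdsWithin_mono _ (fun y hy => ⟨⟨hy.1, hy.2.le⟩, ne_of_lt hy.2⟩))
  have hev : ∀ᶠ y in 𝓝[Set.Ioo a b] b, slope w b y < 0 :=
    htend.eventually_lt_const hb'
  obtain ⟨y, hsy, hy⟩ := (hev.and self_mem_nhdsWithin).exists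
  have hyb : w b < w y := by
    rw [slope_def_field] at hsy
    rcases div_neg_iff.mp hsy with ⟨h1, h2⟩ | ⟨h1, h2⟩
    · linarith [hy.2]
    · linarith
  obtain ⟨x1, hx1, hx1eq⟩ := intermediate_value_Icc hy.1.le
    (hwc.mono (Set.Icc_subset_Icc le_rfl hy.2.le)) ⟨hlt.le, hyb.le⟩
  have hx1a : a < x1 := by
    rcases eq_or_lt_of_le hx1.1 with h | h
    · exfalso; rw [← h] at hx1eq; exact hlt.ne hx1eq
    · exact h
  have hx1b : x1 < b := lt_of_le_of_lt hx1.2 hy.2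
  obtain ⟨η, hη, hη0⟩ := exists_hasDerivAt_eq_zero hx1b
    (hwc.mono (Set.Icc_subset_Icc hx1a.le le_rfl)) hx1eq
    (fun z hz => hwd z ⟨hx1a.trans hz.1, hz.2⟩)
  exact ⟨η, ⟨hx1a.trans hη.1, hη.2⟩, hη0⟩

lemma flett_key_s4 (a b : ℝ) (hab : a < b) (N : ℝ) (hN : 0 < N) (w w' : ℝ → ℝ)
    (hwc : ContinuousOn w (Set.Icc a b))
    (hwd : ∀ x ∈ Set.Ioo a b, HasDerivAt w (w' x) x)
    (hwb : HasDerivWithinAt w (w' b) (Set.Ioc a b) b)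
    (hkey : w' b = N * (w a - w b) / (b - a)) :
    ∃ η ∈ Set.Ioo a b, w' η = 0 := by
  rcases lt_trichotomy (w a) (w b) with h | h | h
  · exact flett_aux_s4 a b hab N hN w w' hwc hwd hwb hkey h
  · exact exists_hasDerivAt_eq_zero hab hwc h hwd
  · obtain ⟨η, hη, hη0⟩ := flett_aux_s4 a b hab N hN (fun x => -(w x)) (fun x => -(w' x))
      hwc.neg (fun x hx => (hwd x hx).neg) hwb.neg
      (by show -w' b = _; rw [hkey]; ring) (neg_lt_neg h)
    exact ⟨η, hη, neg_eq_zero.mp hη0⟩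


lemma sumDeriv (a b : ℝ) (m : ℕ) (F : ℕ → ℝ → ℝ)
    (hF : ∀ i ≤ m, ∀ x ∈ Set.Icc a b, HasDerivWithinAt (F i) (F (i + 1) x) (Set.Icc a b) x)
    {x : ℝ} (hx : x ∈ Set.Icc a b) :
    HasDerivWithinAt (fun y => ∑ k ∈ Finset.range (m + 1), F k y * (a - y) ^ k / (Nat.factorial k))
      (F (m + 1) x * (a - x) ^ m / (Nat.factorial m)) (Set.Icc a b) x := by
  induction m with
  | zero =>
      simp only [Finset.sum_range_one, pow_zero, mul_one, Nat.factorial_zero, Nat.cast_one,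
        div_one]
      simpa using hF 0 le_rfl x hx
  | succ m ih =>
      have hsum := ih (fun i hi => hF i (hi.trans (Nat.le_succ m)))
      have hpow : HasDerivWithinAt (fun y : ℝ => (a - y) ^ (m + 1))
          (-((m + 1) * (a - x) ^ m)) (Set.Icc a b) x := by
        have h := ((hasDerivWithinAt_id x (Set.Icc a b)).const_sub a).pow (m + 1)
        exact h.congr_deriv (by simp)
      have hterm : HasDerivWithinAt (fun y => F (m + 1) y * (a - y) ^ (m + 1) / (Nat.factorial (m + 1)))
          ((F (m + 2) x * (a - x) ^ (m + 1) + F (m + 1) x * -((m + 1) * (a - x) ^ m)) / (Nat.factorial (m + 1)))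
          (Set.Icc a b) x :=
        ((hF (m + 1) le_rfl x hx).mul hpow).div_const _
      have h := hsum.add hterm
      have heq : F (m + 1) x * (a - x) ^ m / (Nat.factorial m) +
          (F (m + 2) x * (a - x) ^ (m + 1) + F (m + 1) x * -((m + 1) * (a - x) ^ m)) / (Nat.factorial (m + 1))
          = F (m + 2) x * (a - x) ^ (m + 1) / (Nat.factorial (m + 1)) := by
        have h1 : (Nat.factorial (m + 1) : ℝ) = (m + 1) * Nat.factorial m := by
          rw [Nat.factorial_succ]; push_cast; ring
        have h2 : (Nat.factorial m : ℝ) ≠ 0 := Nat.cast_ne_zero.mpr (Nat.factorial_ne_zero m)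
        have h3 : (m + 1 : ℝ) ≠ 0 := by positivity
        rw [h1]; field_simp; ring
      rw [heq] at h
      rw [show (fun y => ∑ k ∈ Finset.range (m + 1 + 1), F k y * (a - y) ^ k / (Nat.factorial k)) = _ from
        funext fun y => Finset.sum_range_succ _ _]
      exact h

lemma uDeriv (a b : ℝ) (m : ℕ) (F : ℕ → ℝ → ℝ)
    (hF : ∀ i ≤ m, ∀ x ∈ Set.Icc a b, HasDerivWithinAt (F i) (F (i + 1) x) (Set.Icc a b) x)
    {x : ℝ} (hx : x ∈ Set.Icc a b) :
    HasDerivWithinAt (fun y => (-1 : ℝ) ^ (m + 1) *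
        (F 0 a - ∑ k ∈ Finset.range (m + 1), F k y * (a - y) ^ k / (Nat.factorial k)))
      (F (m + 1) x * (x - a) ^ m / (Nat.factorial m)) (Set.Icc a b) x := by
  have h := ((sumDeriv a b m F hF hx).const_sub (F 0 a)).const_mul ((-1 : ℝ) ^ (m + 1))
  refine h.congr_deriv ?_
  symm
  have hsign : ((-1 : ℝ)) ^ (m + 1) * (-1) ^ m = -1 := by
    rw [← pow_add]
    exact Odd.neg_one_pow ⟨m, by ring⟩
  have hax : (a - x) ^ m = (-1 : ℝ) ^ m * (x - a) ^ m := by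
    rw [show a - x = -(x - a) by ring, neg_pow]
  rw [hax]
  field_simp
  linear_combination (F (m + 1) x * (x - a) ^ m) * hsign

lemma peano (a b : ℝ) (hab : a < b) (m : ℕ) (F : ℕ → ℝ → ℝ)
    (hF : ∀ i ≤ m, ∀ x ∈ Set.Icc a b, HasDerivWithinAt (F i) (F (i + 1) x) (Set.Icc a b) x) :
    Filter.Tendsto (fun x => ((-1 : ℝ) ^ (m + 1) *
        (F 0 a - ∑ k ∈ Finset.range (m + 1), F k x * (a - x) ^ k / (Nat.factorial k)))
        / (x - a) ^ (m + 1))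
      (𝓝[Set.Ioc a b] a) (𝓝 (F (m + 1) a / (Nat.factorial (m + 1)))) := by
  set u : ℝ → ℝ := fun y => (-1 : ℝ) ^ (m + 1) *
      (F 0 a - ∑ k ∈ Finset.range (m + 1), F k y * (a - y) ^ k / (Nat.factorial k)) with hu_def
  have hu : ∀ x ∈ Set.Icc a b,
      HasDerivWithinAt u (F (m + 1) x * (x - a) ^ m / (Nat.factorial m)) (Set.Icc a b) x :=
    fun x hx => uDeriv a b m F hF hx
  set χ : ℝ → ℝ := fun y => u y - F (m + 1) a * (y - a) ^ (m + 1) / (Nat.factorial (m + 1))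
    with hχ_def
  set D : ℝ → ℝ := fun y => F m y - F m a - F (m + 1) a * (y - a) with hD_def
  set E : ℝ → ℝ := fun y => χ y - (y - a) ^ m * D y / (Nat.factorial m) with hE_def
  have hfac1 : ((Nat.factorial (m + 1)) : ℝ) = (m + 1) * Nat.factorial m := by
    rw [Nat.factorial_succ]; push_cast; ring
  have hfacne : ((Nat.factorial m) : ℝ) ≠ 0 := Nat.cast_ne_zero.mpr (Nat.factorial_ne_zero m)
  have hm1 : ((m : ℝ) + 1) ≠ 0 := by positivity
  have hD : ∀ x ∈ Set.Icc a b,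
      HasDerivWithinAt D (F (m + 1) x - F (m + 1) a) (Set.Icc a b) x := by
    intro x hx
    have h := ((hF m le_rfl x hx).sub_const (F m a)).sub
      (((hasDerivWithinAt_id x (Set.Icc a b)).sub_const a).const_mul (F (m + 1) a))
    exact h.congr_deriv (by simp)
  have hE : ∀ x ∈ Set.Icc a b,
      HasDerivWithinAt E (-((m : ℝ) * (x - a) ^ (m - 1) * D x / (Nat.factorial m)))
        (Set.Icc a b) x := by
    intro x hx
    have hpow : HasDerivWithinAt (fun y : ℝ => (y - a) ^ (m + 1))
        (((m : ℝ) + 1) * (x - a) ^ m) (Set.Icc a b) x := by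
      have h := ((hasDerivWithinAt_id x (Set.Icc a b)).sub_const a).pow (m + 1)
      exact h.congr_deriv (by simp)
    have hpow' : HasDerivWithinAt (fun y : ℝ => (y - a) ^ m)
        ((m : ℝ) * (x - a) ^ (m - 1)) (Set.Icc a b) x := by
      have h := ((hasDerivWithinAt_id x (Set.Icc a b)).sub_const a).pow m
      exact h.congr_deriv (by simp)
    have hχ : HasDerivWithinAt χ
        (F (m + 1) x * (x - a) ^ m / (Nat.factorial m)
          - F (m + 1) a * (((m : ℝ) + 1) * (x - a) ^ m) / (Nat.factorial (m + 1)))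
        (Set.Icc a b) x :=
      (hu x hx).sub ((hpow.const_mul (F (m + 1) a)).div_const _)
    have hE0 := hχ.sub ((hpow'.mul (hD x hx)).div_const ((Nat.factorial m : ℝ)))
    refine hE0.congr_deriv ?_
    symm
    rw [hfac1]
    field_simp
    ring
  have hEa : E a = 0 := by
    have hsum : ∑ k ∈ Finset.range (m + 1), F k a * (0 : ℝ) ^ k / (Nat.factorial k) = F 0 a := by
      rw [Finset.sum_range_succ']
      simp
    simp [hE_def, hχ_def, hD_def, hu_def, sub_self, hsum]
  have key : Filter.Tendsto (fun x => χ x / (x - a) ^ (m + 1)) (𝓝[Set.Ioc a b] a) (𝓝 0) := by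
    rw [Metric.tendsto_nhdsWithin_nhds]
    intro ε hε
    have hFm := hF m le_rfl a ⟨le_rfl, hab.le⟩
    have hslope := hasDerivWithinAt_iff_tendsto_slope.mp hFm
    have hDlim : Filter.Tendsto (fun x => D x / (x - a)) (𝓝[Set.Icc a b \ {a}] a) (𝓝 0) := by
      have h := hslope.sub_const (F (m + 1) a)
      rw [sub_self] at h
      apply h.congr'
      filter_upwards [self_mem_nhdsWithin] with x hx
      have hxa : x - a ≠ 0 := sub_ne_zero.mpr (fun h => hx.2 h)
      rw [slope_def_field, hD_def]
      field_simp
    rw [Metric.tendsto_nhdsWithin_nhds] at hDlim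
    obtain ⟨δ, hδ, hδP⟩ := hDlim (ε / 4) (by positivity)
    refine ⟨δ, hδ, ?_⟩
    intro x hx hxd
    have hxa : 0 < x - a := sub_pos.mpr hx.1
    have hbound : ∀ t ∈ Set.Icc a x, |D t| ≤ (ε / 4) * (t - a) := by
      intro t ht
      rcases eq_or_lt_of_le ht.1 with h | h
      · simp [hD_def, ← h]
      · have htm : t ∈ Set.Icc a b \ {a} :=
          ⟨⟨ht.1, ht.2.trans hx.2⟩, fun hh => ne_of_gt h (Set.mem_singleton_iff.mp hh)⟩
        have hdist : dist t a < δ := by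
          rw [Real.dist_eq] at hxd ⊢
          rw [abs_of_pos (sub_pos.mpr h)]
          rw [abs_of_pos hxa] at hxd
          linarith [ht.2]
        have := hδP htm hdist
        rw [Real.dist_eq, sub_zero, abs_div, abs_of_pos (sub_pos.mpr h)] at this
        calc |D t| = |D t| / (t - a) * (t - a) :=
              (div_mul_cancel₀ _ (ne_of_gt (sub_pos.mpr h))).symm
        _ ≤ (ε / 4) * (t - a) :=
            mul_le_mul_of_nonneg_right (le_of_lt this) (sub_pos.mpr h).le
    have hEb : ∀ t ∈ Set.Icc a x,
        ‖-((m : ℝ) * (t - a) ^ (m - 1) * D t / (Nat.factorial m))‖ ≤ (ε / 4) * (x - a) ^ m := by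
      intro t ht
      rcases Nat.eq_zero_or_pos m with rfl | hm
      · simp
        positivity
      · obtain ⟨p, rfl⟩ : ∃ p, m = p + 1 := ⟨m - 1, (Nat.succ_pred_eq_of_pos hm).symm⟩
        have hta : 0 ≤ t - a := sub_nonneg.mpr ht.1
        have htx : t - a ≤ x - a := by linarith [ht.2]
        have hfle : ((p : ℝ) + 1) ≤ (Nat.factorial (p + 1) : ℝ) := by
          exact_mod_cast Nat.self_le_factorial (p + 1)
        have hfpos : (0 : ℝ) < (Nat.factorial (p + 1) : ℝ) := by positivity
        rw [norm_neg, Real.norm_eq_abs, abs_div, abs_mul, abs_mul]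
        push_cast
        rw [abs_of_nonneg (by positivity : (0:ℝ) ≤ ((p : ℝ) + 1)),
          abs_of_nonneg (pow_nonneg hta p), abs_of_nonneg hfpos.le]
        calc ((p : ℝ) + 1) * (t - a) ^ p * |D t| / (Nat.factorial (p + 1))
            ≤ ((p : ℝ) + 1) * (t - a) ^ p * ((ε / 4) * (t - a)) / (Nat.factorial (p + 1)) := by
              gcongr
              exact hbound t ht
        _ = (ε / 4) * (t - a) ^ (p + 1) * (((p : ℝ) + 1) / (Nat.factorial (p + 1))) := by
              rw [pow_succ]; ring
        _ ≤ (ε / 4) * (t - a) ^ (p + 1) * 1 := by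
              gcongr
              exact (div_le_one hfpos).mpr hfle
        _ = (ε / 4) * (t - a) ^ (p + 1) := by ring
        _ ≤ (ε / 4) * (x - a) ^ (p + 1) := by
              gcongr
    have hEd : ∀ t ∈ Set.Icc a x,
        HasDerivWithinAt E (-((m : ℝ) * (t - a) ^ (m - 1) * D t / (Nat.factorial m)))
          (Set.Icc a x) t :=
      fun t ht => (hE t ⟨ht.1, ht.2.trans hx.2⟩).mono (Set.Icc_subset_Icc le_rfl hx.2)
    have hMVT := Convex.norm_image_sub_le_of_norm_hasDerivWithin_le hEd hEb (convex_Icc a x)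
      (Set.left_mem_Icc.mpr (by linarith)) (Set.right_mem_Icc.mpr (by linarith))
    rw [hEa, sub_zero, Real.norm_eq_abs, Real.norm_eq_abs, abs_of_pos hxa] at hMVT
    have hDx : |D x| ≤ (ε / 4) * (x - a) := hbound x (Set.right_mem_Icc.mpr (by linarith))
    have hχx : |χ x| ≤ (ε / 2) * (x - a) ^ (m + 1) := by
      have hfac1' : (1 : ℝ) ≤ (Nat.factorial m : ℝ) := by
        exact_mod_cast Nat.one_le_iff_ne_zero.mpr (Nat.factorial_ne_zero m)
      have hEx : χ x = E x + (x - a) ^ m * D x / (Nat.factorial m) := by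
        rw [hE_def]; ring
      rw [hEx]
      calc |E x + (x - a) ^ m * D x / (Nat.factorial m)|
          ≤ |E x| + |(x - a) ^ m * D x / (Nat.factorial m)| := abs_add_le _ _
      _ ≤ (ε / 4) * (x - a) ^ m * (x - a)
            + (x - a) ^ m * ((ε / 4) * (x - a)) / (Nat.factorial m) := by
          apply add_le_add hMVT
          rw [abs_div, abs_mul, abs_of_nonneg (by positivity : (0:ℝ) ≤ (x - a) ^ m),
            abs_of_nonneg (by positivity : (0:ℝ) ≤ ((Nat.factorial m : ℝ)))]
          gcongr
      _ ≤ (ε / 4) * (x - a) ^ (m + 1) + (ε / 4) * (x - a) ^ (m + 1) := by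
          apply add_le_add
          · exact le_of_eq (by ring)
          · rw [show (x - a) ^ m * ((ε / 4) * (x - a)) = (ε / 4) * (x - a) ^ (m + 1) by
              rw [pow_succ]; ring]
            exact div_le_self (by positivity) hfac1'
      _ = (ε / 2) * (x - a) ^ (m + 1) := by ring
    rw [Real.dist_eq, sub_zero, abs_div, abs_of_pos (pow_pos hxa (m + 1))]
    calc |χ x| / (x - a) ^ (m + 1)
        ≤ (ε / 2) * (x - a) ^ (m + 1) / (x - a) ^ (m + 1) := by gcongr
    _ = ε / 2 := by field_simp
    _ < ε := by linarith
  have key2 := key.add_const (F (m + 1) a / (Nat.factorial (m + 1)))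
  rw [zero_add] at key2
  apply key2.congr'
  filter_upwards [self_mem_nhdsWithin] with x hx
  have hxa : (x - a) ≠ 0 := ne_of_gt (sub_pos.mpr hx.1)
  rw [hχ_def]
  have hne : ((x - a) ^ (m + 1) : ℝ) ≠ 0 := pow_ne_zero _ hxa
  have hfne : ((Nat.factorial (m + 1) : ℝ)) ≠ 0 := Nat.cast_ne_zero.mpr (Nat.factorial_ne_zero _)
  field_simp
  ring

/-- **Higher-order Flett theorem without the endpoint condition.** -/
theorem pawlikowska_no_endpoint (a b : ℝ) (hab : a < b) (n : ℕ) (hn : 1 ≤ n)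
    (F : ℕ → ℝ → ℝ)
    (hF : ∀ i < n, ∀ x ∈ Set.Icc a b,
      HasDerivWithinAt (F i) (F (i + 1) x) (Set.Icc a b) x) :
    ∃ η ∈ Set.Ioo a b,
      F 0 a = taylorPoly F n η a +
        (a - η) ^ (n + 1) / (Nat.factorial (n + 1)) * ((F n b - F n a) / (b - a)) := by
  obtain ⟨m, rfl⟩ : ∃ m, n = m + 1 := ⟨n - 1, by omega⟩
  have hF' : ∀ i ≤ m, ∀ x ∈ Set.Icc a b, HasDerivWithinAt (F i) (F (i + 1) x) (Set.Icc a b) x :=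
    fun i hi => hF i (by omega)
  have hbne : b - a ≠ 0 := ne_of_gt (sub_pos.mpr hab)
  have hfacne : ((Nat.factorial m) : ℝ) ≠ 0 := Nat.cast_ne_zero.mpr (Nat.factorial_ne_zero m)
  have hm1 : ((m : ℝ) + 1) ≠ 0 := by positivity
  have hm2 : ((m : ℝ) + 2) ≠ 0 := by positivity
  have hfac1 : ((Nat.factorial (m + 1)) : ℝ) = ((m : ℝ) + 1) * Nat.factorial m := by
    rw [Nat.factorial_succ]; push_cast; ring
  have hfac2 : ((Nat.factorial (m + 2)) : ℝ) = ((m : ℝ) + 2) * (((m : ℝ) + 1) * Nat.factorial m) := by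
    rw [Nat.factorial_succ]; push_cast [hfac1]; ring
  set c : ℝ := (F (m + 1) b - F (m + 1) a) / (b - a) with hc_def
  set K : ℝ := ((m : ℝ) + 1) * c / (Nat.factorial (m + 2)) with hK_def
  set u : ℝ → ℝ := fun y => (-1 : ℝ) ^ (m + 1) *
      (F 0 a - ∑ k ∈ Finset.range (m + 1), F k y * (a - y) ^ k / (Nat.factorial k)) with hu_def
  have hu : ∀ x ∈ Set.Icc a b,
      HasDerivWithinAt u (F (m + 1) x * (x - a) ^ m / (Nat.factorial m)) (Set.Icc a b) x :=
    fun x hx => uDeriv a b m F hF' hx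
  set v : ℝ → ℝ := fun y =>
    if y = a then F (m + 1) a / (Nat.factorial (m + 1)) else u y / (y - a) ^ (m + 1) with hv_def
  set dv : ℝ → ℝ := fun y =>
    F (m + 1) y * (y - a) ^ m / (Nat.factorial m) / (y - a) ^ (m + 1)
      - ((m : ℝ) + 1) * u y / (y - a) ^ (m + 2) with hdv_def
  -- derivative of v on Ioc
  have hvq : ∀ x ∈ Set.Ioc a b, HasDerivWithinAt v (dv x) (Set.Ioc a b) x := by
    intro x hx
    have hxa : x - a ≠ 0 := ne_of_gt (sub_pos.mpr hx.1)
    have hxIcc : x ∈ Set.Icc a b := ⟨hx.1.le, hx.2⟩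
    have hpow : HasDerivWithinAt (fun y : ℝ => (y - a) ^ (m + 1))
        (((m : ℝ) + 1) * (x - a) ^ m) (Set.Icc a b) x := by
      have h := ((hasDerivWithinAt_id x (Set.Icc a b)).sub_const a).pow (m + 1)
      exact h.congr_deriv (by simp)
    have hq := ((hu x hxIcc).div hpow (pow_ne_zero _ hxa)).mono Set.Ioc_subset_Icc_self
    have hq2 : HasDerivWithinAt v
        ((F (m + 1) x * (x - a) ^ m / (Nat.factorial m) * (x - a) ^ (m + 1)
          - u x * (((m : ℝ) + 1) * (x - a) ^ m)) / ((x - a) ^ (m + 1)) ^ 2)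
        (Set.Ioc a b) x := by
      apply hq.congr
      · intro y hy
        rw [hv_def]
        simp only [if_neg (ne_of_gt hy.1), Pi.div_apply]
      · rw [hv_def]
        simp only [if_neg (ne_of_gt hx.1), Pi.div_apply]
    convert hq2 using 1
    rw [hdv_def]
    field_simp
    ring
  have hvd : ∀ x ∈ Set.Ioo a b, HasDerivAt v (dv x) x := by
    intro x hx
    exact (hvq x ⟨hx.1, hx.2.le⟩).hasDerivAt
      (Filter.mem_of_superset (Ioo_mem_nhds hx.1 hx.2) Set.Ioo_subset_Ioc_self)
  have hvb : HasDerivWithinAt v (dv b) (Set.Ioc a b) b := hvq b ⟨hab, le_rfl⟩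
  -- continuity of v
  have hvc : ContinuousOn v (Set.Icc a b) := by
    intro x hx
    rcases eq_or_ne x a with h | hxa
    · subst h
      rw [← continuousWithinAt_diff_self, Set.Icc_diff_left]
      have hp := peano x b hab m F hF'
      show Filter.Tendsto v (𝓝[Set.Ioc x b] x) (𝓝 (v x))
      rw [show v x = F (m + 1) x / (Nat.factorial (m + 1)) from by rw [hv_def]; simp]
      apply Filter.Tendsto.congr' ?_ hp
      filter_upwards [self_mem_nhdsWithin] with y hy
      rw [hv_def]
      simp only [if_neg (ne_of_gt hy.1), hu_def]
    · have hax : a < x := lt_of_le_of_ne hx.1 (Ne.symm hxa)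
      have hcu : ContinuousWithinAt u (Set.Icc a b) x := (hu x hx).continuousWithinAt
      have hcq : ContinuousWithinAt (fun y => u y / (y - a) ^ (m + 1)) (Set.Icc a b) x :=
        hcu.div (((continuous_id.sub continuous_const).pow (m + 1)).continuousWithinAt)
          (pow_ne_zero _ (sub_ne_zero.mpr hxa))
      apply hcq.congr_of_eventuallyEq
      · apply mem_nhdsWithin_of_mem_nhds
        filter_upwards [isOpen_Ioi.mem_nhds hax] with y hy
        rw [hv_def]
        simp only [if_neg (ne_of_gt (show a < y from hy))]
      · rw [hv_def]; simp only [if_neg hxa]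
  -- the auxiliary function w
  set w : ℝ → ℝ := fun y => v y - K * y with hw_def
  set dw : ℝ → ℝ := fun y => dv y - K with hdw_def
  have hwc : ContinuousOn w (Set.Icc a b) :=
    hvc.sub ((continuous_const.mul continuous_id).continuousOn)
  have hwd : ∀ x ∈ Set.Ioo a b, HasDerivAt w (dw x) x := by
    intro x hx
    have h := (hvd x hx).sub ((hasDerivAt_id x).const_mul K)
    exact h.congr_deriv (by simp [hdw_def])
  have hwb : HasDerivWithinAt w (dw b) (Set.Ioc a b) b := by
    have h := hvb.sub (((hasDerivWithinAt_id b (Set.Ioc a b)).const_mul K))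
    exact h.congr_deriv (by simp [hdw_def])
  have hkey : dw b = ((m : ℝ) + 1) * (w a - w b) / (b - a) := by
    rw [hdw_def, hdv_def, hw_def, hv_def]
    simp only [if_pos rfl, if_neg (ne_of_gt hab), ite_true]
    rw [hK_def, hc_def, hfac2, hfac1]
    field_simp
    ring
  obtain ⟨η, hη, hη0⟩ := flett_key_s4 a b hab ((m : ℝ) + 1) (by positivity) w dw hwc hwd hwb hkey
  have hdvη : dv η = K := by
    have h : dv η - K = 0 := hη0
    linarith
  refine ⟨η, hη, ?_⟩
  have hηne : η - a ≠ 0 := ne_of_gt (sub_pos.mpr hη.1)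
  have heq : K * (η - a) ^ (m + 2) =
      F (m + 1) η * (η - a) ^ (m + 1) / (Nat.factorial m) - ((m : ℝ) + 1) * u η := by
    rw [← hdvη, hdv_def]
    field_simp
    ring
  simp only [hK_def, hc_def, hu_def] at heq
  field_simp at heq
  rw [taylorPoly, Finset.sum_range_succ]
  rw [show (∑ i ∈ Finset.range (m + 1), F i η / (Nat.factorial i : ℝ) * (a - η) ^ i)
      = ∑ k ∈ Finset.range (m + 1), F k η * (a - η) ^ k / (Nat.factorial k) from
    Finset.sum_congr rfl (fun i _ => by ring)]
  set S := ∑ k ∈ Finset.range (m + 1), F k η * (a - η) ^ k / (Nat.factorial k) with hS_def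
  have hsq : (-1 : ℝ) ^ (m + 1) * (-1) ^ (m + 1) = 1 := by
    rw [← pow_add]; exact Even.neg_one_pow ⟨m + 1, by ring⟩
  have h1 : (a - η) ^ (m + 1) = (-1 : ℝ) ^ (m + 1) * (η - a) ^ (m + 1) := by
    rw [show a - η = -(η - a) by ring, neg_pow]
  have h2 : (a - η) ^ (m + 2) = (-1 : ℝ) ^ (m + 2) * (η - a) ^ (m + 2) := by
    rw [show a - η = -(η - a) by ring, neg_pow]
  rw [show m + 1 + 1 = m + 2 from rfl, hfac2, hfac1, hc_def, h1, h2]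
  rw [hfac2] at heq
  field_simp
  apply mul_left_cancel₀ (mul_ne_zero hm1 hfacne)
  linear_combination ((-1 : ℝ) ^ (m + 1)) * heq +
    (-(F 0 a - S) * ((m : ℝ) + 1) * (Nat.factorial m) * ((m : ℝ) + 2) * ((m : ℝ) + 1) *
      (Nat.factorial m) * (b - a)) * hsq
end

section
/- Trahan's lemma (used in the paper): Let a < b be real numbers and let F : [a,b] → ℝ be continuous on [a,b] and differentiable on (a,b]. If F'(b)·(F(b) - F(a)) ≤ 0, then there exists η ∈ (a,b] such that F'(η) = 0. -/
open Set Filter Topology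

lemma trahan_aux (a b : ℝ) (hab : a < b) (F F' : ℝ → ℝ)
    (hcont : ContinuousOn F (Set.Icc a b))
    (hdiff : ∀ x ∈ Set.Ioc a b, HasDerivWithinAt F (F' x) (Set.Ioc a b) x)
    (hpos : 0 < F' b) (hle : F b ≤ F a) :
    ∃ η ∈ Set.Ioc a b, F' η = 0 := by
  have hb : b ∈ Set.Ioc a b := ⟨hab, le_refl b⟩
  -- find y ∈ Ioo a b with F y < F b
  have hslope : Tendsto (slope F b) (𝓝[Set.Ioc a b \ {b}] b) (𝓝 (F' b)) :=
    (hasDerivWithinAt_iff_tendsto_slope.1 (hdiff b hb))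
  have hdiff' : Set.Ioc a b \ {b} = Set.Ioo a b := by
    ext x; simp [Set.mem_Ioc, Set.mem_Ioo, and_comm, lt_iff_le_and_ne, and_assoc]
  rw [hdiff'] at hslope
  have hne : (𝓝[Set.Ioo a b] b).NeBot := by
    refine mem_closure_iff_nhdsWithin_neBot.1 ?_
    rw [closure_Ioo hab.ne]
    exact ⟨hab.le, le_refl b⟩
  have hev : ∀ᶠ y in 𝓝[Set.Ioo a b] b, 0 < slope F b y :=
    hslope (Ioi_mem_nhds hpos)
  have hmem : ∀ᶠ y in 𝓝[Set.Ioo a b] b, y ∈ Set.Ioo a b :=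
    eventually_mem_nhdsWithin
  obtain ⟨y, hy1, hy2⟩ := (hev.and hmem).exists
  have hyb : F y < F b := by
    have hd : y - b < 0 := sub_neg.2 hy2.2
    have heq : slope F b y = (F y - F b) / (y - b) := slope_def_field F b y
    rw [heq] at hy1
    rcases div_pos_iff.1 hy1 with ⟨h1, h2⟩ | ⟨h1, h2⟩
    · linarith
    · linarith
  -- min on compact interval
  obtain ⟨c, hc, hmin⟩ := isCompact_Icc.exists_isMinOn ⟨a, Set.left_mem_Icc.2 hab.le⟩ hcont
  have hcy : F c ≤ F y := hmin (Set.mem_Icc_of_Ioo hy2)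
  have hca : c ≠ a := by rintro rfl; linarith
  have hcb : c ≠ b := by rintro rfl; linarith
  have hcIoo : c ∈ Set.Ioo a b := ⟨lt_of_le_of_ne hc.1 (Ne.symm hca), lt_of_le_of_ne hc.2 hcb⟩
  have hnhds : Set.Ioc a b ∈ 𝓝 c :=
    mem_of_superset (isOpen_Ioo.mem_nhds hcIoo) Set.Ioo_subset_Ioc_self
  have hda : HasDerivAt F (F' c) c :=
    (hdiff c (Set.Ioo_subset_Ioc_self hcIoo)).hasDerivAt hnhds
  have hloc : IsLocalMin F c :=
    hmin.isLocalMin (mem_of_superset (isOpen_Ioo.mem_nhds hcIoo) Set.Ioo_subset_Icc_self)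
  exact ⟨c, Set.Ioo_subset_Ioc_self hcIoo, hloc.hasDerivAt_eq_zero hda⟩

/-- **Trahan's lemma.** If `F` is continuous on `[a,b]`, differentiable at every
point of `(a,b]` (one-sided at `b`), and `F' b * (F b - F a) ≤ 0`, then there is
`η ∈ (a,b]` with `F' η = 0`. -/
theorem trahan_lemma (a b : ℝ) (hab : a < b) (F F' : ℝ → ℝ)
    (hcont : ContinuousOn F (Set.Icc a b))
    (hdiff : ∀ x ∈ Set.Ioc a b, HasDerivWithinAt F (F' x) (Set.Ioc a b) x)
    (hcond : F' b * (F b - F a) ≤ 0) :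
    ∃ η ∈ Set.Ioc a b, F' η = 0 := by
  rcases lt_trichotomy (F' b) 0 with h | h | h
  · -- apply aux to -F
    have hle : F a ≤ F b := by nlinarith
    obtain ⟨η, hη, hη0⟩ := trahan_aux a b hab (fun x => -F x) (fun x => -F' x)
      hcont.neg (fun x hx => (hdiff x hx).neg) (by simpa using h) (by simpa using hle)
    exact ⟨η, hη, by linarith [hη0]⟩
  · exact ⟨b, ⟨hab, le_refl b⟩, h⟩
  · have hle : F b ≤ F a := by nlinarith
    exact trahan_aux a b hab F F' hcont hdiff h hle
end

section
/- Iterated intermediate step in the new proof of Pawlikowska's theorem: Let a < b be real numbers, let n ≥ 1, and let f : [a,b] → ℝ be n-times differentiable on [a,b] with f⁽ⁿ⁾(a) = f⁽ⁿ⁾(b). Then for every k with 1 ≤ k ≤ n there exists u ∈ (a,b) such that f⁽ⁿ⁻ᵏ⁾(u) - f⁽ⁿ⁻ᵏ⁾(a) = Σ_{i=1}^{k} ((-1)^{i+1}/i!) (u - a)^i f⁽ⁿ⁻ᵏ⁺ⁱ⁾(u). -/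
open Set Filter Asymptotics Topology


-- alternating sum identity
lemma aux_alt (K : ℕ) :
    ∑ i ∈ Finset.range (K + 1), (-1 : ℝ) ^ i /
      ((Nat.factorial i : ℝ) * (Nat.factorial (K + 1 - i) : ℝ)) =
      (-1 : ℝ) ^ K / (Nat.factorial (K + 1) : ℝ) := by
  have h0 : ∑ i ∈ Finset.range (K + 2), (-1 : ℝ) ^ i * ((K + 1).choose i : ℝ) = 0 := by
    have h := Int.alternating_sum_range_choose (n := K + 1)
    rw [if_neg (by omega)] at h
    exact_mod_cast congrArg (fun z : ℤ => (z : ℝ)) h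
  have hsum : ∑ i ∈ Finset.range (K + 1), (-1 : ℝ) ^ i * ((K + 1).choose i : ℝ)
      = -(-1 : ℝ) ^ (K + 1) := by
    have h := Finset.sum_range_succ (fun i => (-1 : ℝ) ^ i * ((K + 1).choose i : ℝ)) (K + 1)
    rw [h0, Nat.choose_self] at h
    push_cast at h
    linarith
  have hKfac : ((K + 1).factorial : ℝ) ≠ 0 := by positivity
  calc ∑ i ∈ Finset.range (K + 1), (-1 : ℝ) ^ i /
        ((Nat.factorial i : ℝ) * (Nat.factorial (K + 1 - i) : ℝ))
      = ∑ i ∈ Finset.range (K + 1),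
          (-1 : ℝ) ^ i * ((K + 1).choose i : ℝ) / ((K + 1).factorial : ℝ) := by
        refine Finset.sum_congr rfl fun i hi => ?_
        have hiK : i ≤ K + 1 := by
          have := Finset.mem_range.mp hi; omega
        have hfac : (((K + 1).choose i : ℝ)) * (Nat.factorial i : ℝ) *
            (Nat.factorial (K + 1 - i) : ℝ) = ((K + 1).factorial : ℝ) := by
          exact_mod_cast congrArg (fun z : ℕ => (z : ℝ))
            (Nat.choose_mul_factorial_mul_factorial hiK)
        have h1 : (Nat.factorial i : ℝ) ≠ 0 := by positivity
        have h2 : (Nat.factorial (K + 1 - i) : ℝ) ≠ 0 := by positivity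
        field_simp
        linear_combination (-1 : ℝ) * hfac
    _ = (∑ i ∈ Finset.range (K + 1), (-1 : ℝ) ^ i * ((K + 1).choose i : ℝ)) /
          ((K + 1).factorial : ℝ) := by rw [Finset.sum_div]
    _ = (-1 : ℝ) ^ K / (Nat.factorial (K + 1) : ℝ) := by
        rw [hsum, pow_succ]; ring

lemma aux_idk (c : ℕ → ℝ) (y : ℝ) :
    ∀ k, 1 ≤ k →
      (∑ i ∈ Finset.range k, (-1 : ℝ) ^ i / (Nat.factorial i : ℝ) *
        (y ^ i * ∑ l ∈ Finset.range (k - i + 1), c (i + l) / (Nat.factorial l : ℝ) * y ^ l))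
      = c 0 + (-1 : ℝ) ^ (k - 1) / (Nat.factorial k : ℝ) * (y ^ k * c k) := by
  intro k hk
  induction k, hk using Nat.le_induction with
  | base =>
    simp [Finset.sum_range_succ]
    ring
  | succ k hk ih =>
    obtain ⟨k', rfl⟩ : ∃ k', k = k' + 1 := ⟨k - 1, by omega⟩
    rw [Finset.sum_range_succ]
    have hstep : ∀ i ∈ Finset.range (k' + 1),
        (-1 : ℝ) ^ i / (Nat.factorial i : ℝ) *
          (y ^ i * ∑ l ∈ Finset.range (k' + 1 + 1 - i + 1), c (i + l) / (Nat.factorial l : ℝ) * y ^ l)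
        = (-1 : ℝ) ^ i / (Nat.factorial i : ℝ) *
            (y ^ i * ∑ l ∈ Finset.range (k' + 1 - i + 1), c (i + l) / (Nat.factorial l : ℝ) * y ^ l)
          + (-1 : ℝ) ^ i / ((Nat.factorial i : ℝ) * (Nat.factorial (k' + 1 + 1 - i) : ℝ)) *
              (c (k' + 2) * y ^ (k' + 2)) := by
      intro i hi
      have hik : i ≤ k' + 1 := by have := Finset.mem_range.mp hi; omega
      rw [show k' + 1 + 1 - i + 1 = (k' + 1 - i + 1) + 1 from by omega, Finset.sum_range_succ,
        show i + (k' + 1 - i + 1) = k' + 2 from by omega]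
      have hy : y ^ i * y ^ (k' + 1 - i + 1) = y ^ (k' + 2) := by
        rw [← pow_add]; congr 1; omega
      rw [show k' + 1 - i + 1 = k' + 1 + 1 - i from by omega] at hy ⊢
      linear_combination ((-1 : ℝ) ^ i * c (k' + 2) /
        ((Nat.factorial i : ℝ) * (Nat.factorial (k' + 1 + 1 - i) : ℝ))) * hy
    rw [Finset.sum_congr rfl hstep, Finset.sum_add_distrib, ih, ← Finset.sum_mul]
    have halt : ∑ i ∈ Finset.range (k' + 1), (-1 : ℝ) ^ i /
        ((Nat.factorial i : ℝ) * (Nat.factorial (k' + 1 + 1 - i) : ℝ))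
        = (-1 : ℝ) ^ (k' + 1) / (Nat.factorial (k' + 2) : ℝ)
          - (-1 : ℝ) ^ (k' + 1) / ((Nat.factorial (k' + 1) : ℝ)) := by
      have h := aux_alt (k' + 1)
      rw [Finset.sum_range_succ] at h
      simp only [Nat.add_sub_cancel, show k' + 1 + 1 - (k'+1) = 1 from by omega,
        Nat.factorial_one, Nat.cast_one, mul_one] at h ⊢
      have : (Nat.factorial (k' + 1 + 1) : ℝ) = (Nat.factorial (k' + 2) : ℝ) := by norm_num
      rw [this] at h
      linarith
    rw [halt]
    -- peeled outer term i = k'+1 : inner sum range (k'+1+1-(k'+1)+1) = range 2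
    rw [show k' + 1 + 1 - (k' + 1) + 1 = 2 from by omega]
    rw [Finset.sum_range_succ, Finset.sum_range_one]
    simp only [Nat.add_sub_cancel, Nat.factorial_zero, Nat.factorial_one, Nat.cast_one,
      pow_zero, pow_one, Nat.add_zero]
    rw [show k' + 1 + 1 = k' + 2 from rfl]
    have hs1 : (-1 : ℝ) ^ (k' + 1) = -(-1 : ℝ) ^ k' := by rw [pow_succ]; ring
    rw [hs1]
    ring

-- little-o upgrade via MVT
lemma aux_llo {a b : ℝ} {R R' : ℝ → ℝ}
    (hd : ∀ x ∈ Set.Icc a b, HasDerivWithinAt R (R' x) (Set.Icc a b) x)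
    (h0 : R a = 0) {r : ℕ}
    (h : R' =o[nhdsWithin a (Set.Icc a b)] fun x => (x - a) ^ r) :
    R =o[nhdsWithin a (Set.Icc a b)] fun x => (x - a) ^ (r + 1) := by
  rw [Asymptotics.isLittleO_iff] at h ⊢
  intro ε hε
  have hh := h hε
  rw [eventually_nhdsWithin_iff, Metric.eventually_nhds_iff] at hh ⊢
  obtain ⟨δ, hδ, hb⟩ := hh
  refine ⟨δ, hδ, fun x hxd hx => ?_⟩
  have hax : a ≤ x := hx.1
  have hsub : Set.Icc a x ⊆ Set.Icc a b := Set.Icc_subset_Icc le_rfl hx.2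
  have kbound : ∀ t ∈ Set.Icc a x, ‖R' t‖ ≤ ε * (x - a) ^ r := by
    intro t ht
    have h1 : dist t a < δ := by
      rw [Real.dist_eq, abs_of_nonneg (sub_nonneg.mpr ht.1)]
      rw [Real.dist_eq, abs_of_nonneg (sub_nonneg.mpr hax)] at hxd
      linarith [ht.2]
    have h2 := hb h1 (hsub ht)
    calc ‖R' t‖ ≤ ε * ‖(t - a) ^ r‖ := h2
      _ = ε * (t - a) ^ r := by
          rw [norm_pow, Real.norm_eq_abs, abs_of_nonneg (sub_nonneg.mpr ht.1)]
      _ ≤ ε * (x - a) ^ r := by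
          have := pow_le_pow_left₀ (sub_nonneg.mpr ht.1) (by linarith [ht.2] : t - a ≤ x - a) r
          nlinarith
  have hmvt := Convex.norm_image_sub_le_of_norm_hasDerivWithin_le
    (f := R) (f' := R') (fun t ht => (hd t (hsub ht)).mono hsub) kbound
    (convex_Icc a x) (Set.left_mem_Icc.mpr hax) (Set.right_mem_Icc.mpr hax)
  rw [h0, sub_zero] at hmvt
  calc ‖R x‖ ≤ ε * (x - a) ^ r * ‖x - a‖ := hmvt
    _ = ε * ‖(x - a) ^ (r + 1)‖ := by
        rw [norm_pow, Real.norm_eq_abs, abs_of_nonneg (sub_nonneg.mpr hax), pow_succ]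
        ring

-- Peano-form Taylor remainder
lemma aux_peano (a b : ℝ) (hab : a ≤ b) (n : ℕ) (F : ℕ → ℝ → ℝ)
    (hF : ∀ i < n, ∀ x ∈ Set.Icc a b,
      HasDerivWithinAt (F i) (F (i + 1) x) (Set.Icc a b) x) :
    ∀ r, 1 ≤ r → ∀ j, j + r ≤ n →
      (fun x => F j x - ∑ l ∈ Finset.range (r + 1),
          F (j + l) a / (Nat.factorial l : ℝ) * (x - a) ^ l)
        =o[nhdsWithin a (Set.Icc a b)] fun x => (x - a) ^ r := by
  intro r hr
  induction r, hr using Nat.le_induction with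
  | base =>
    intro j hj
    have ha : a ∈ Set.Icc a b := Set.left_mem_Icc.mpr hab
    have h := hasDerivWithinAt_iff_isLittleO.mp (hF j (by omega) a ha)
    refine (h.congr' ?_ ?_)
    · refine Filter.EventuallyEq.of_eq (funext fun x => ?_)
      simp [Finset.sum_range_succ]
      ring
    · exact Filter.EventuallyEq.of_eq (funext fun x => (pow_one _).symm)
  | succ r hr ih =>
    intro j hj
    set R : ℝ → ℝ := fun x => F j x - ∑ l ∈ Finset.range (r + 1 + 1),
      F (j + l) a / (Nat.factorial l : ℝ) * (x - a) ^ l with hR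
    set R' : ℝ → ℝ := fun x => F (j + 1) x - ∑ l ∈ Finset.range (r + 1),
      F (j + 1 + l) a / (Nat.factorial l : ℝ) * (x - a) ^ l with hR'
    have hd : ∀ x ∈ Set.Icc a b, HasDerivWithinAt R (R' x) (Set.Icc a b) x := by
      intro x hx
      have hP : HasDerivWithinAt
          (fun y => ∑ l ∈ Finset.range (r + 1 + 1),
            F (j + l) a / (Nat.factorial l : ℝ) * (y - a) ^ l)
          (∑ l ∈ Finset.range (r + 1 + 1),
            F (j + l) a / (Nat.factorial l : ℝ) * ((l : ℝ) * (x - a) ^ (l - 1)))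
          (Set.Icc a b) x := by
        refine HasDerivWithinAt.fun_sum fun l _ => ?_
        have hpow : HasDerivWithinAt (fun y => (y - a) ^ l)
            ((l : ℝ) * (x - a) ^ (l - 1)) (Set.Icc a b) x := by
          simpa using (((hasDerivAt_id x).sub_const a).fun_pow l).hasDerivWithinAt
        exact hpow.const_mul _
      have hsum : (∑ l ∈ Finset.range (r + 1 + 1),
            F (j + l) a / (Nat.factorial l : ℝ) * ((l : ℝ) * (x - a) ^ (l - 1)))
          = ∑ l ∈ Finset.range (r + 1),
            F (j + 1 + l) a / (Nat.factorial l : ℝ) * (x - a) ^ l := by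
        rw [Finset.sum_range_succ']
        simp only [Nat.cast_zero, Nat.factorial_zero, Nat.cast_one, zero_mul, mul_zero, add_zero]
        refine Finset.sum_congr rfl fun l _ => ?_
        have h1 : (Nat.factorial (l + 1) : ℝ) = ((l : ℝ) + 1) * (Nat.factorial l : ℝ) := by
          exact_mod_cast Nat.factorial_succ l
        rw [show j + (l + 1) = j + 1 + l from by omega, h1, Nat.add_sub_cancel]
        have h2 : (Nat.factorial l : ℝ) ≠ 0 := by positivity
        have h3 : ((l : ℝ) + 1) ≠ 0 := by positivity
        field_simp
        push_cast
        ring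
      have := (hF j (by omega) x hx).sub (hsum ▸ hP)
      exact this
    have hRa : R a = 0 := by
      rw [hR]
      simp only
      rw [Finset.sum_range_succ']
      simp [zero_pow]
    have hlo := ih (j + 1) (by omega)
    exact aux_llo hd hRa hlo

-- telescoping derivative of the auxiliary function
lemma aux_telescope (a b : ℝ) (n : ℕ) (F : ℕ → ℝ → ℝ)
    (hF : ∀ i < n, ∀ x ∈ Set.Icc a b,
      HasDerivWithinAt (F i) (F (i + 1) x) (Set.Icc a b) x) :
    ∀ k, 1 ≤ k → ∀ m, m + k ≤ n → ∀ x ∈ Set.Icc a b,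
      HasDerivWithinAt
        (fun y => ∑ i ∈ Finset.range k,
          (-1 : ℝ) ^ i / (Nat.factorial i : ℝ) * ((y - a) ^ i * F (m + i) y))
        ((-1 : ℝ) ^ (k - 1) / (Nat.factorial (k - 1) : ℝ) *
          ((x - a) ^ (k - 1) * F (m + k) x))
        (Set.Icc a b) x := by
  intro k hk
  induction k, hk using Nat.le_induction with
  | base =>
    intro m hm x hx
    have h := hF m (by omega) x hx
    simpa [Finset.sum_range_one] using h
  | succ k hk ih =>
    intro m hm x hx
    obtain ⟨k', rfl⟩ : ∃ k', k = k' + 1 := ⟨k - 1, by omega⟩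
    have hIH := ih m (by omega) x hx
    have hpow : HasDerivWithinAt (fun y => (y - a) ^ (k' + 1))
        (((k' : ℝ) + 1) * (x - a) ^ k') (Set.Icc a b) x := by
      simpa using (((hasDerivAt_id x).sub_const a).fun_pow (k' + 1)).hasDerivWithinAt
    have hmul := hpow.fun_mul (hF (m + (k' + 1)) (by omega) x hx)
    have hterm := hmul.const_mul ((-1 : ℝ) ^ (k' + 1) / (Nat.factorial (k' + 1) : ℝ))
    have hadd := hIH.fun_add hterm
    have hfun : (fun y => (∑ i ∈ Finset.range (k' + 1),
          (-1 : ℝ) ^ i / (Nat.factorial i : ℝ) * ((y - a) ^ i * F (m + i) y))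
          + (-1 : ℝ) ^ (k' + 1) / (Nat.factorial (k' + 1) : ℝ) *
            ((y - a) ^ (k' + 1) * F (m + (k' + 1)) y))
        = fun y => ∑ i ∈ Finset.range (k' + 1 + 1),
          (-1 : ℝ) ^ i / (Nat.factorial i : ℝ) * ((y - a) ^ i * F (m + i) y) := by
      funext y
      conv_rhs => rw [Finset.sum_range_succ]
    rw [hfun] at hadd
    refine hadd.congr_deriv (Eq.symm ?_)
    simp only [Nat.add_sub_cancel]
    have h1 : (Nat.factorial (k' + 1) : ℝ) = ((k' : ℝ) + 1) * (Nat.factorial k' : ℝ) := by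
      exact_mod_cast Nat.factorial_succ k'
    have h2 : (Nat.factorial k' : ℝ) ≠ 0 := by positivity
    have h3 : ((k' : ℝ) + 1) ≠ 0 := by positivity
    rw [show m + (k' + 1 + 1) = m + (k' + 1) + 1 from by omega, h1]
    field_simp
    ring

set_option maxHeartbeats 1000000

/-- **Iterated intermediate step in the new proof of Pawlikowska's theorem.**
`F i` denotes the `i`-th derivative of `f = F 0`. For every `1 ≤ k ≤ n` there
exists `u ∈ (a,b)` with
`f⁽ⁿ⁻ᵏ⁾(u) - f⁽ⁿ⁻ᵏ⁾(a) = ∑_{i=1}^{k} ((-1)^{i+1}/i!) (u-a)^i f⁽ⁿ⁻ᵏ⁺ⁱ⁾(u)`. -/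
theorem pawlikowska_iteration (a b : ℝ) (hab : a < b) (n : ℕ) (hn : 1 ≤ n)
    (F : ℕ → ℝ → ℝ)
    (hF : ∀ i < n, ∀ x ∈ Set.Icc a b,
      HasDerivWithinAt (F i) (F (i + 1) x) (Set.Icc a b) x)
    (hends : F n a = F n b) :
    ∀ k, 1 ≤ k → k ≤ n →
      ∃ u ∈ Set.Ioo a b,
        F (n - k) u - F (n - k) a =
          ∑ i ∈ Finset.Icc 1 k,
            (-1 : ℝ) ^ (i + 1) / (Nat.factorial i) * (u - a) ^ i * F (n - k + i) u := by
  intro k hk1 hkn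
  obtain ⟨k', rfl⟩ : ∃ k', k = k' + 1 := ⟨k - 1, by omega⟩
  set m := n - (k' + 1) with hmdef
  have hmk : m + (k' + 1) = n := by omega
  set g : ℝ → ℝ := fun x => ∑ i ∈ Finset.range (k' + 1),
    (-1 : ℝ) ^ i / (Nat.factorial i : ℝ) * ((x - a) ^ i * F (m + i) x) with hg
  set L : ℝ := (-1 : ℝ) ^ k' / (Nat.factorial (k' + 1) : ℝ) * F n a with hL
  have hfacs : (Nat.factorial (k' + 1) : ℝ) = ((k' : ℝ) + 1) * (Nat.factorial k' : ℝ) := by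
    exact_mod_cast Nat.factorial_succ k'
  have hfk : (Nat.factorial k' : ℝ) ≠ 0 := by positivity
  have hk1' : ((k' : ℝ) + 1) ≠ 0 := by positivity
  -- derivative of g
  have hgd : ∀ x ∈ Set.Icc a b, HasDerivWithinAt g
      ((-1 : ℝ) ^ k' / (Nat.factorial k' : ℝ) * ((x - a) ^ k' * F n x)) (Set.Icc a b) x := by
    intro x hx
    have h := aux_telescope a b n F hF (k' + 1) (by omega) m (by omega) x hx
    simp only [Nat.add_sub_cancel] at h
    rw [hmk] at h
    exact h
  have hga : g a = F m a := by
    rw [hg]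
    simp only
    rw [Finset.sum_range_succ']
    simp [zero_pow]
  -- the little-o statement at a
  have hlo : (fun x => g x - g a - L * (x - a) ^ (k' + 1))
      =o[nhdsWithin a (Set.Icc a b)] fun x => (x - a) ^ (k' + 1) := by
    have hterm : ∀ i ∈ Finset.range (k' + 1),
        (fun x => (-1 : ℝ) ^ i / (Nat.factorial i : ℝ) *
          ((x - a) ^ i * (F (m + i) x - ∑ l ∈ Finset.range (k' + 1 - i + 1),
            F (m + i + l) a / (Nat.factorial l : ℝ) * (x - a) ^ l)))
          =o[nhdsWithin a (Set.Icc a b)] fun x => (x - a) ^ (k' + 1) := by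
      intro i hi
      have hik : i ≤ k' := by have := Finset.mem_range.mp hi; omega
      have hp := aux_peano a b hab.le n F hF (k' + 1 - i) (by omega) (m + i) (by omega)
      have h1 := (Asymptotics.isBigO_refl (fun x : ℝ => (x - a) ^ i)
        (nhdsWithin a (Set.Icc a b))).mul_isLittleO hp
      have h2 := h1.const_mul_left ((-1 : ℝ) ^ i / (Nat.factorial i : ℝ))
      refine h2.congr (fun x => rfl) (fun x => ?_)
      rw [← pow_add]
      congr 1
      omega
    have hsum : (fun x => ∑ i ∈ Finset.range (k' + 1),
        (-1 : ℝ) ^ i / (Nat.factorial i : ℝ) *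
          ((x - a) ^ i * (F (m + i) x - ∑ l ∈ Finset.range (k' + 1 - i + 1),
            F (m + i + l) a / (Nat.factorial l : ℝ) * (x - a) ^ l)))
        =o[nhdsWithin a (Set.Icc a b)] fun x => (x - a) ^ (k' + 1) :=
      Asymptotics.IsLittleO.fun_sum hterm
    refine hsum.congr (fun x => ?_) (fun x => rfl)
    have hid := aux_idk (fun s => F (m + s) a) (x - a) (k' + 1) (by omega)
    simp only [Nat.add_sub_cancel, Nat.add_zero] at hid
    rw [show m + (k' + 1) = n from hmk] at hid
    have hsplit : ∀ i ∈ Finset.range (k' + 1),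
        (-1 : ℝ) ^ i / (Nat.factorial i : ℝ) *
          ((x - a) ^ i * (F (m + i) x - ∑ l ∈ Finset.range (k' + 1 - i + 1),
            F (m + i + l) a / (Nat.factorial l : ℝ) * (x - a) ^ l))
        = (-1 : ℝ) ^ i / (Nat.factorial i : ℝ) * ((x - a) ^ i * F (m + i) x)
          - (-1 : ℝ) ^ i / (Nat.factorial i : ℝ) *
            ((x - a) ^ i * ∑ l ∈ Finset.range (k' + 1 - i + 1),
              F (m + (i + l)) a / (Nat.factorial l : ℝ) * (x - a) ^ l) := by
      intro i _
      have hassoc : ∀ l, F (m + i + l) a = F (m + (i + l)) a := fun l => by rw [add_assoc]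
      simp only [hassoc]
      ring
    rw [Finset.sum_congr rfl hsplit, Finset.sum_sub_distrib, hid, hga, hg]
    simp only
    rw [hL]
    ring
  -- the rational auxiliary function and its derivative
  set φ : ℝ → ℝ := fun x =>
    (g x - g a - L * (x - a) ^ (k' + 1)) / (x - a) ^ (k' + 1) + L with hφ
  set φd : ℝ → ℝ := fun x =>
    ((x - a) * ((-1 : ℝ) ^ k' / (Nat.factorial k' : ℝ) * ((x - a) ^ k' * F n x))
      - ((k' : ℝ) + 1) * (g x - g a)) / (x - a) ^ (k' + 2) with hφd
  have hφa : φ a = L := by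
    rw [hφ]
    simp [zero_pow]
  have hφderiv : ∀ x ∈ Set.Ioc a b, HasDerivWithinAt φ (φd x) (Set.Ioc a b) x := by
    intro x hx
    have hxa : x - a ≠ 0 := sub_ne_zero.mpr hx.1.ne'
    have hsub : Set.Ioc a b ⊆ Set.Icc a b := Set.Ioc_subset_Icc_self
    have hpow : HasDerivWithinAt (fun y => (y - a) ^ (k' + 1))
        (((k' : ℝ) + 1) * (x - a) ^ k') (Set.Ioc a b) x := by
      simpa using (((hasDerivAt_id x).sub_const a).fun_pow (k' + 1)).hasDerivWithinAt
    have hu : HasDerivWithinAt (fun y => g y - g a - L * (y - a) ^ (k' + 1))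
        ((-1 : ℝ) ^ k' / (Nat.factorial k' : ℝ) * ((x - a) ^ k' * F n x)
          - L * (((k' : ℝ) + 1) * (x - a) ^ k')) (Set.Ioc a b) x :=
      (((hgd x (hsub hx)).mono hsub).sub_const (g a)).sub (hpow.const_mul L)
    have hdiv := (hu.fun_div hpow (pow_ne_zero _ hxa)).add_const L
    rw [hφ, hφd]
    simp only
    refine hdiv.congr_deriv (Eq.symm ?_)
    field_simp
    ring
  -- key existence statement
  have key : ∃ u ∈ Set.Ioo a b,
      (-1 : ℝ) ^ (k' + 1) / (Nat.factorial (k' + 1) : ℝ) * ((u - a) ^ (k' + 1) * F n u)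
        + (g u - g a) = 0 := by
    by_contra hcon
    push_neg at hcon
    have hφd0 : ∀ x ∈ Set.Ioo a b, φd x ≠ 0 := by
      intro x hx
      have hxa : x - a ≠ 0 := sub_ne_zero.mpr hx.1.ne'
      have hnum : (x - a) * ((-1 : ℝ) ^ k' / (Nat.factorial k' : ℝ) * ((x - a) ^ k' * F n x))
          - ((k' : ℝ) + 1) * (g x - g a)
          = -((k' : ℝ) + 1) * ((-1 : ℝ) ^ (k' + 1) / (Nat.factorial (k' + 1) : ℝ) *
              ((x - a) ^ (k' + 1) * F n x) + (g x - g a)) := by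
        rw [hfacs]
        field_simp
        ring
      rw [hφd]
      simp only
      rw [hnum]
      exact div_ne_zero (mul_ne_zero (neg_ne_zero.mpr hk1') (hcon x hx)) (pow_ne_zero _ hxa)
    -- continuity of φ on Icc a b
    have hφc : ContinuousOn φ (Set.Icc a b) := by
      intro x hx
      rcases eq_or_lt_of_le hx.1 with rfl | hax
      · have ht := hlo.tendsto_div_nhds_zero
        have ht2 := ht.add_const L
        rw [zero_add] at ht2
        show Filter.Tendsto φ (nhdsWithin a (Set.Icc a b)) (nhds (φ a))
        rw [hφa, hφ]
        exact ht2
      · have hxa : (x - a) ^ (k' + 1) ≠ 0 := pow_ne_zero _ (sub_ne_zero.mpr hax.ne')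
        have hc1 : ContinuousWithinAt g (Set.Icc a b) x := (hgd x hx).continuousWithinAt
        have hc2 : ContinuousWithinAt (fun y : ℝ => (y - a) ^ (k' + 1)) (Set.Icc a b) x :=
          Continuous.continuousWithinAt ((continuous_id.sub continuous_const).pow _)
        rw [hφ]
        exact (((hc1.sub continuousWithinAt_const).sub
          (continuousWithinAt_const.mul hc2)).div hc2 hxa).add continuousWithinAt_const
    -- φd has constant sign on Ioo a b
    have hsign : (∀ x ∈ Set.Ioo a b, 0 < φd x) ∨ (∀ x ∈ Set.Ioo a b, φd x < 0) := by
      by_contra hs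
      push_neg at hs
      obtain ⟨⟨x₁, hx₁, hx₁'⟩, x₂, hx₂, hx₂'⟩ := hs
      have hs₁' : φd x₁ < 0 := lt_of_le_of_ne hx₁' (hφd0 x₁ hx₁)
      have hs₂' : 0 < φd x₂ := lt_of_le_of_ne hx₂' (Ne.symm (hφd0 x₂ hx₂))
      rcases lt_trichotomy x₁ x₂ with h12 | h12 | h12
      · have hss : Set.Icc x₁ x₂ ⊆ Set.Ioc a b := fun t ht =>
          ⟨lt_of_lt_of_le hx₁.1 ht.1, le_trans ht.2 hx₂.2.le⟩
        have hD : ∀ t ∈ Set.Icc x₁ x₂, HasDerivWithinAt φ (φd t) (Set.Icc x₁ x₂) t :=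
          fun t ht => (hφderiv t (hss ht)).mono hss
        obtain ⟨c, hc, hc0⟩ :=
          exists_hasDerivWithinAt_eq_of_gt_of_lt h12.le hD hs₁' hs₂'
        exact hφd0 c ⟨lt_trans hx₁.1 hc.1, lt_of_lt_of_le hc.2 hx₂.2.le⟩ hc0
      · rw [h12] at hs₁'; linarith
      · have hss : Set.Icc x₂ x₁ ⊆ Set.Ioc a b := fun t ht =>
          ⟨lt_of_lt_of_le hx₂.1 ht.1, le_trans ht.2 hx₁.2.le⟩
        have hD : ∀ t ∈ Set.Icc x₂ x₁, HasDerivWithinAt φ (φd t) (Set.Icc x₂ x₁) t :=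
          fun t ht => (hφderiv t (hss ht)).mono hss
        obtain ⟨c, hc, hc0⟩ :=
          exists_hasDerivWithinAt_eq_of_lt_of_gt h12.le hD hs₂' hs₁'
        exact hφd0 c ⟨lt_trans hx₂.1 hc.1, lt_of_lt_of_le hc.2 hx₁.2.le⟩ hc0
    have hbmem : b ∈ Set.Icc a b := Set.right_mem_Icc.mpr hab.le
    have hamem : a ∈ Set.Icc a b := Set.left_mem_Icc.mpr hab.le
    have hIoc : Set.Ioc a b \ {b} = Set.Ioo a b := by
      ext t
      constructor
      · rintro ⟨⟨h1, h2⟩, h3⟩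
        exact ⟨h1, lt_of_le_of_ne h2 (by simpa using h3)⟩
      · rintro ⟨h1, h2⟩
        exact ⟨⟨h1, h2.le⟩, by simp [ne_of_lt h2]⟩
    have hne : (nhdsWithin b (Set.Ioo a b)).NeBot := by
      apply mem_closure_iff_nhdsWithin_neBot.mp
      rw [closure_Ioo hab.ne]
      exact hbmem
    have hbpos : (0 : ℝ) < b - a := sub_pos.mpr hab
    have hben : (0 : ℝ) < (b - a) ^ (k' + 2) := pow_pos hbpos _
    have hp1 : (0 : ℝ) < (b - a) ^ (k' + 1) := pow_pos hbpos _
    have hident : (b - a) * ((-1 : ℝ) ^ k' / (Nat.factorial k' : ℝ) * ((b - a) ^ k' * F n b))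
        = ((k' : ℝ) + 1) * (L * (b - a) ^ (k' + 1)) := by
      rw [hL, hfacs, hends]
      field_simp
      ring
    have hnumval : (b - a) * ((-1 : ℝ) ^ k' / (Nat.factorial k' : ℝ) * ((b - a) ^ k' * F n b))
        - ((k' : ℝ) + 1) * (g b - g a) = φd b * (b - a) ^ (k' + 2) := by
      rw [hφd]
      field_simp
    rcases hsign with hpos | hneg
    · -- increasing case
      have hmono : StrictMonoOn φ (Set.Icc a b) := by
        apply strictMonoOn_of_deriv_pos (convex_Icc a b) hφc
        intro x hx
        rw [interior_Icc] at hx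
        have hD := (hφderiv x ⟨hx.1, hx.2.le⟩).hasDerivAt (Ioc_mem_nhds hx.1 hx.2)
        rw [hD.deriv]
        exact hpos x hx
      have hlt : φ a < φ b := hmono hamem hbmem hab
      have hφdb : 0 ≤ φd b := by
        have hDb := hφderiv b (Set.right_mem_Ioc.mpr hab)
        rw [hasDerivWithinAt_iff_tendsto_slope, hIoc] at hDb
        haveI := hne
        refine ge_of_tendsto hDb ?_
        filter_upwards [self_mem_nhdsWithin] with t ht
        have h1 : φ t < φ b := hmono ⟨ht.1.le, ht.2.le⟩ hbmem ht.2
        rw [slope_def_field]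
        exact le_of_lt (div_pos_of_neg_of_neg (by linarith) (by linarith [ht.2]))
      have hnumb : 0 ≤ ((k' : ℝ) + 1) * (L * (b - a) ^ (k' + 1))
          - ((k' : ℝ) + 1) * (g b - g a) := by
        rw [← hident, hnumval]
        exact mul_nonneg hφdb hben.le
      have hineq : g b - g a ≤ L * (b - a) ^ (k' + 1) := by
        have hkpos : (0 : ℝ) < (k' : ℝ) + 1 := by positivity
        nlinarith [hnumb]
      have hble : φ b ≤ L := by
        rw [hφ]
        simp only
        have hdle : (g b - g a - L * (b - a) ^ (k' + 1)) / (b - a) ^ (k' + 1) ≤ 0 :=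
          div_nonpos_of_nonpos_of_nonneg (by linarith) hp1.le
        linarith
      rw [hφa] at hlt
      linarith
    · -- decreasing case
      have hanti : StrictAntiOn φ (Set.Icc a b) := by
        apply strictAntiOn_of_deriv_neg (convex_Icc a b) hφc
        intro x hx
        rw [interior_Icc] at hx
        have hD := (hφderiv x ⟨hx.1, hx.2.le⟩).hasDerivAt (Ioc_mem_nhds hx.1 hx.2)
        rw [hD.deriv]
        exact hneg x hx
      have hlt : φ b < φ a := hanti hamem hbmem hab
      have hφdb : φd b ≤ 0 := by
        have hDb := hφderiv b (Set.right_mem_Ioc.mpr hab)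
        rw [hasDerivWithinAt_iff_tendsto_slope, hIoc] at hDb
        haveI := hne
        refine le_of_tendsto hDb ?_
        filter_upwards [self_mem_nhdsWithin] with t ht
        have h1 : φ b < φ t := hanti ⟨ht.1.le, ht.2.le⟩ hbmem ht.2
        rw [slope_def_field]
        exact le_of_lt (div_neg_of_pos_of_neg (by linarith) (by linarith [ht.2]))
      have hnumb : ((k' : ℝ) + 1) * (L * (b - a) ^ (k' + 1))
          - ((k' : ℝ) + 1) * (g b - g a) ≤ 0 := by
        rw [← hident, hnumval]
        exact mul_nonpos_of_nonpos_of_nonneg hφdb hben.le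
      have hineq : L * (b - a) ^ (k' + 1) ≤ g b - g a := by
        have hkpos : (0 : ℝ) < (k' : ℝ) + 1 := by positivity
        nlinarith [hnumb]
      have hbge : L ≤ φ b := by
        rw [hφ]
        simp only
        have hdge : 0 ≤ (g b - g a - L * (b - a) ^ (k' + 1)) / (b - a) ^ (k' + 1) :=
          div_nonneg (by linarith) hp1.le
        linarith
      rw [hφa] at hlt
      linarith
  -- convert the key statement into the required form
  obtain ⟨u, hu, hueq⟩ := key
  refine ⟨u, hu, ?_⟩
  rw [hga] at hueq
  simp only [hg] at hueq
  rw [Finset.sum_range_succ'] at hueq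
  simp only [pow_zero, Nat.factorial_zero, Nat.cast_one, one_mul, div_one, Nat.add_zero] at hueq
  rw [show Finset.Icc 1 (k' + 1) = Finset.Ico 1 (k' + 1 + 1) from by rw [Finset.Ico_add_one_right_eq_Icc],
    Finset.sum_Ico_eq_sum_range]
  simp only [Nat.add_sub_cancel]
  rw [Finset.sum_range_succ]
  have hterm2 : ∀ i ∈ Finset.range k',
      (-1 : ℝ) ^ (1 + i + 1) / (Nat.factorial (1 + i) : ℝ) * (u - a) ^ (1 + i) *
        F (m + (1 + i)) u
      = -((-1 : ℝ) ^ (i + 1) / (Nat.factorial (i + 1) : ℝ) *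
          ((u - a) ^ (i + 1) * F (m + (i + 1)) u)) := by
    intro i _
    rw [show 1 + i = i + 1 from by omega, pow_succ ((-1 : ℝ)) (i + 1)]
    ring
  rw [Finset.sum_congr rfl hterm2, Finset.sum_neg_distrib]
  rw [show 1 + k' = k' + 1 from by omega, show m + (k' + 1) = n from hmk]
  have hsgn : (-1 : ℝ) ^ (k' + 1 + 1) = -(-1 : ℝ) ^ (k' + 1) := by rw [pow_succ]; ring
  rw [hsgn]
  linear_combination hueq
end

section
/- Formula for the n-th derivative of the difference quotient: Let a < b be real numbers, let n ≥ 1, and let f : [a,b] → ℝ be n-times differentiable on [a,b]. Define g : (a,b] → ℝ by g(x) = (f(x) - f(a))/(x - a). Then for every x ∈ (a,b], the n-th derivative of g at x satisfies g⁽ⁿ⁾(x) = ((-1)ⁿ n!/(x-a)^{n+1}) · ( f(x) - f(a) + Σ_{i=1}^{n} ((-1)^i/i!) (x - a)^i f⁽ⁱ⁾(x) ), equivalently g⁽ⁿ⁾(x) = ((-1)ⁿ n!/(x-a)^{n+1}) · (T_n(f, x)(a) - f(a)). -/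
set_option maxRecDepth 8000

/-- **Formula for the `n`-th derivative of the difference quotient**
`g x = (f x - f a)/(x - a)` on `(a,b]`, where `F i` is the `i`-th derivative of
`f = F 0`. The `n`-th derivative of `g` on `(a,b]` is taken in the sense of
`iteratedDerivWithin` on `(a,b]` (one-sided at `b`). Both equivalent forms from
the paper are stated. -/
theorem iteratedDeriv_difference_quotient (a b : ℝ) (hab : a < b) (n : ℕ) (hn : 1 ≤ n)
    (F : ℕ → ℝ → ℝ)
    (hF : ∀ i < n, ∀ x ∈ Set.Icc a b,
      HasDerivWithinAt (F i) (F (i + 1) x) (Set.Icc a b) x)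
    (g : ℝ → ℝ) (hg : ∀ x ∈ Set.Ioc a b, g x = (F 0 x - F 0 a) / (x - a)) :
    ∀ x ∈ Set.Ioc a b,
      iteratedDerivWithin n g (Set.Ioc a b) x =
          (-1 : ℝ) ^ n * (Nat.factorial n) / (x - a) ^ (n + 1) *
            (F 0 x - F 0 a +
              ∑ i ∈ Finset.Icc 1 n,
                (-1 : ℝ) ^ i / (Nat.factorial i) * (x - a) ^ i * F i x) ∧
      iteratedDerivWithin n g (Set.Ioc a b) x =
          (-1 : ℝ) ^ n * (Nat.factorial n) / (x - a) ^ (n + 1) *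
            (taylorPoly F n x a - F 0 a) := by
  have husub : Set.Ioc a b ⊆ Set.Icc a b := Set.Ioc_subset_Icc_self
  have hud : UniqueDiffOn ℝ (Set.Ioc a b) := uniqueDiffOn_Ioc a b
  set T : ℕ → ℝ → ℝ :=
    fun k y => ∑ i ∈ Finset.range (k + 1), F i y / (Nat.factorial i) * (a - y) ^ i with hT
  set G : ℕ → ℝ → ℝ :=
    fun k y => (-1 : ℝ) ^ k * (Nat.factorial k) / (y - a) ^ (k + 1) * (T k y - F 0 a) with hG
  -- derivative of the Taylor-type sum
  have hTderiv : ∀ k, k < n → ∀ x ∈ Set.Ioc a b,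
      HasDerivWithinAt (T k) (F (k + 1) x / (Nat.factorial k) * (a - x) ^ k)
        (Set.Ioc a b) x := by
    intro k
    induction k with
    | zero =>
      intro _ x hx
      have h := (hF 0 hn x (husub hx)).mono husub
      have heq : T 0 = fun y => F 0 y := by
        funext y; simp [hT]
      rw [heq]
      simpa using h
    | succ k ih =>
      intro hk x hx
      have h1 := ih (by omega) x hx
      have hf := (hF (k + 1) (by omega) x (husub hx)).mono husub
      have hpow : HasDerivWithinAt (fun y => (a - y) ^ (k + 1))
          ((k + 1 : ℕ) * (a - x) ^ k * (-1)) (Set.Ioc a b) x := by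
        have := ((hasDerivWithinAt_id x (Set.Ioc a b)).const_sub a).pow (k + 1)
        exact this.congr_deriv (by simp)
      have h2 := (hf.div_const ((Nat.factorial (k + 1) : ℝ))).mul hpow
      have h3 := h1.add h2
      have heq : T (k + 1) = fun y =>
          T k y + F (k + 1) y / (Nat.factorial (k + 1)) * (a - y) ^ (k + 1) := by
        funext y; simp [hT, Finset.sum_range_succ]
      rw [heq]
      refine h3.congr_deriv ?_
      have hfac : (Nat.factorial (k + 1) : ℝ) = (k + 1) * Nat.factorial k := by
        push_cast [Nat.factorial_succ]; ring
      have h0 : (Nat.factorial k : ℝ) ≠ 0 := Nat.cast_ne_zero.mpr (Nat.factorial_ne_zero k)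
      have h0' : (k : ℝ) + 1 ≠ 0 := by positivity
      rw [hfac]
      field_simp
      push_cast
      ring
  -- derivative of G
  have hGderiv : ∀ k, k < n → ∀ x ∈ Set.Ioc a b,
      HasDerivWithinAt (G k) (G (k + 1) x) (Set.Ioc a b) x := by
    intro k hk x hx
    have hxa : x - a ≠ 0 := sub_ne_zero.mpr (ne_of_gt hx.1)
    have hnum : HasDerivWithinAt
        (fun y => (-1 : ℝ) ^ k * (Nat.factorial k) * (T k y - F 0 a))
        ((-1 : ℝ) ^ k * (Nat.factorial k) * (F (k + 1) x / (Nat.factorial k) * (a - x) ^ k))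
        (Set.Ioc a b) x :=
      ((hTderiv k hk x hx).sub_const _).const_mul _
    have hden : HasDerivWithinAt (fun y => (y - a) ^ (k + 1))
        ((k + 1 : ℕ) * (x - a) ^ k * 1) (Set.Ioc a b) x :=
      ((hasDerivWithinAt_id x (Set.Ioc a b)).sub_const a).pow (k + 1)
    have hden_ne : (x - a) ^ (k + 1) ≠ 0 := pow_ne_zero _ hxa
    have h := hnum.div hden hden_ne
    have heq : G k = fun y =>
        ((-1 : ℝ) ^ k * (Nat.factorial k) * (T k y - F 0 a)) / (y - a) ^ (k + 1) := by
      funext y; simp only [hG]; ring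
    rw [heq]
    refine h.congr_deriv ?_
    -- algebraic identity
    have hTsucc : T (k + 1) x = T k x
        + F (k + 1) x / (Nat.factorial (k + 1)) * (a - x) ^ (k + 1) := by
      simp [hT, Finset.sum_range_succ]
    have hax : a - x = -(x - a) := by ring
    have hm : ((-1 : ℝ) ^ k) * ((-1 : ℝ) ^ k) = 1 := by
      rw [← mul_pow]; norm_num
    have hfac : (Nat.factorial (k + 1) : ℝ) = (k + 1) * Nat.factorial k := by
      push_cast [Nat.factorial_succ]; ring
    have h0 : (Nat.factorial k : ℝ) ≠ 0 := Nat.cast_ne_zero.mpr (Nat.factorial_ne_zero k)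
    have h0' : (k : ℝ) + 1 ≠ 0 := by positivity
    have hax_pow : ∀ j : ℕ, (a - x) ^ j = (-1 : ℝ) ^ j * (x - a) ^ j := by
      intro j; rw [show a - x = -(x - a) by ring, neg_pow]
    have hp : (x - a) ^ k ≠ 0 := pow_ne_zero _ hxa
    simp only [hG, hTsucc, hax_pow, pow_succ, hfac]
    push_cast
    field_simp
    ring_nf
  -- main induction
  have key : ∀ k, k ≤ n → ∀ x ∈ Set.Ioc a b,
      iteratedDerivWithin k g (Set.Ioc a b) x = G k x := by
    intro k
    induction k with
    | zero =>
      intro _ x hx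
      have hxa : x - a ≠ 0 := sub_ne_zero.mpr (ne_of_gt hx.1)
      rw [iteratedDerivWithin_zero, hg x hx]
      simp only [hG, hT]
      simp
      field_simp
    | succ k ih =>
      intro hk x hx
      rw [iteratedDerivWithin_succ]
      rw [derivWithin_congr (fun y hy => ih (by omega) y hy) (ih (by omega) x hx)]
      exact (hGderiv k (by omega) x hx).derivWithin (hud x hx)
  intro x hx
  have hxa : x - a ≠ 0 := sub_ne_zero.mpr (ne_of_gt hx.1)
  have hmain := key n le_rfl x hx
  have hform2 : taylorPoly F n x a = T n x := by
    simp [taylorPoly, hT]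
  have hform1 : T n x = F 0 x +
      ∑ i ∈ Finset.Icc 1 n, (-1 : ℝ) ^ i / (Nat.factorial i) * (x - a) ^ i * F i x := by
    have hterm : ∀ i, F i x / (Nat.factorial i) * (a - x) ^ i
        = (-1 : ℝ) ^ i / (Nat.factorial i) * (x - a) ^ i * F i x := by
      intro i
      rw [show a - x = -(x - a) by ring, neg_pow]
      ring
    have hIcc : Finset.Icc 1 n = Finset.Ico 1 (n + 1) := by
      rw [Finset.Ico_add_one_right_eq_Icc]
    rw [hIcc, Finset.sum_Ico_eq_sum_range]
    simp only [hT]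
    rw [Finset.sum_range_succ']
    simp only [hterm]
    simp [add_comm]
  constructor
  · rw [hmain]
    simp only [hG, hform1]
    ring
  · rw [hmain, hform2]
end
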